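/- arXiv:2304.07457 — 7 statements merged into one kernel-verified Lean document; each statement's English description precedes it below -/
import Mathlib

section
/- Let W be a regular wreath-like product of A and B (i.e., a wreath-like product corresponding to the left-regular action B ↷ B), with canonical homomorphism ε: W → B. If V ≤ W contains the base A^{(B)}, then V is a regular wreath-like product of C and ε(V), where C is the direct sum of |B : ε(V)|-many copies of A. Concretely: fixing a right transversal T of D = ε(V) in B and setting C_d = ⊕_{t∈T} A_{dt} for d ∈ D, one has A^{(B)} = ⊕_{d∈D} C_d and v C_d v⁻¹ = C_{ε(v)d} for all v ∈ V, d ∈ D. -/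
private lemma noncommProd_eq_of_support {ι G : Type*} [Group G] {s u : Finset ι} (hsu : s ⊆ u)
    (f : ι → G) (comm : (↑u : Set ι).Pairwise (Function.onFun Commute f))
    (hf : ∀ i ∈ u, i ∉ s → f i = 1) :
    u.noncommProd f comm = s.noncommProd f (comm.mono (Finset.coe_subset.2 hsu)) := by
  classical
  have hu : s ∪ (u \ s) = u := Finset.union_sdiff_of_subset hsu
  have comm2 : ((↑(s ∪ u \ s) : Set ι)).Pairwise (Function.onFun Commute f) := by
    rw [hu]; exact comm
  have h1 : (s ∪ u \ s).noncommProd f comm2 = u.noncommProd f comm :=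
    Finset.noncommProd_congr hu (fun _ _ => rfl) comm2
  rw [← h1, Finset.noncommProd_union_of_disjoint Finset.disjoint_sdiff f comm2,
    Finset.noncommProd_eq_pow_card (u \ s) f _ 1
      (fun x hx => hf x (Finset.sdiff_subset hx) (Finset.mem_sdiff.1 hx).2),
    one_pow, mul_one]

private lemma mem_biSup_exists_noncommProd {ι G : Type*} [Group G] {A : ι → Subgroup G}
    (hcomm : ∀ i j, i ≠ j → ∀ x ∈ A i, ∀ y ∈ A j, Commute x y)
    {S : Set ι} {x : G} (hx : x ∈ ⨆ i ∈ S, A i) :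
    ∃ (s : Finset ι) (f : ι → G) (hf : ∀ i, f i ∈ A i),
      (∀ i, f i ≠ 1 → i ∈ s ∧ i ∈ S) ∧
      x = s.noncommProd f (fun i _ j _ hij => hcomm i j hij _ (hf i) _ (hf j)) := by
  classical
  rw [← iSup_subtype''] at hx
  refine Subgroup.iSup_induction (C := fun x => ∃ (s : Finset ι) (f : ι → G)
      (hf : ∀ i, f i ∈ A i), (∀ i, f i ≠ 1 → i ∈ s ∧ i ∈ S) ∧
      x = s.noncommProd f (fun i _ j _ hij => hcomm i j hij _ (hf i) _ (hf j)))
    (fun i : S => A (i : ι)) hx ?_ ?_ ?_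
  · intro i y hy
    refine ⟨{(i : ι)}, fun j => if j = (i : ι) then y else 1, ?_, ?_, ?_⟩
    · intro j
      by_cases hj : j = (i : ι)
      · simpa [hj] using hy
      · simp only [if_neg hj]; exact one_mem _
    · intro j hj
      by_cases h : j = (i : ι)
      · exact ⟨by simp [h], h ▸ i.2⟩
      · exact absurd (if_neg h) hj
    · rw [Finset.noncommProd_singleton]; simp
  · exact ⟨∅, fun _ => 1, fun _ => one_mem _, fun i hi => absurd rfl hi,
      (Finset.noncommProd_empty _ _).symm⟩
  · rintro y z ⟨s, f, hf, hfs, rfl⟩ ⟨t, g, hg, hgs, rfl⟩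
    refine ⟨s ∪ t, fun i => f i * g i, fun i => mul_mem (hf i) (hg i), ?_, ?_⟩
    · intro i hi
      by_cases h1 : f i = 1
      · have h2 : g i ≠ 1 := by simpa [h1] using hi
        exact ⟨Finset.mem_union_right _ (hgs i h2).1, (hgs i h2).2⟩
      · exact ⟨Finset.mem_union_left _ (hfs i h1).1, (hfs i h1).2⟩
    · have cff : ((↑(s ∪ t) : Set ι)).Pairwise (Function.onFun Commute f) :=
        fun i _ j _ hij => hcomm i j hij _ (hf i) _ (hf j)
      have cgg : ((↑(s ∪ t) : Set ι)).Pairwise (Function.onFun Commute g) :=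
        fun i _ j _ hij => hcomm i j hij _ (hg i) _ (hg j)
      have cgf : ((↑(s ∪ t) : Set ι)).Pairwise (fun a b => Commute (g a) (f b)) :=
        fun i _ j _ hij => hcomm i j hij _ (hg i) _ (hf j)
      have e1 : s.noncommProd f (fun i _ j _ hij => hcomm i j hij _ (hf i) _ (hf j)) =
          (s ∪ t).noncommProd f cff :=
        (noncommProd_eq_of_support Finset.subset_union_left f cff
          (fun i _ hi => by by_contra hne; exact hi (hfs i hne).1)).symm
      have e2 : t.noncommProd g (fun i _ j _ hij => hcomm i j hij _ (hg i) _ (hg j)) =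
          (s ∪ t).noncommProd g cgg :=
        (noncommProd_eq_of_support Finset.subset_union_right g cgg
          (fun i _ hi => by by_contra hne; exact hi (hgs i hne).1)).symm
      calc s.noncommProd f _ * t.noncommProd g _
          = (s ∪ t).noncommProd f cff * (s ∪ t).noncommProd g cgg := by rw [e1, e2]
        _ = (s ∪ t).noncommProd (fun i => f i * g i)
              (fun i hi j hj hij => (hcomm i j hij _ (mul_mem (hf i) (hg i)) _
                (mul_mem (hf j) (hg j)))) :=
            (Finset.noncommProd_mul_distrib f g cff cgg cgf).symm

private lemma disjoint_biSup_of_disjoint {ι G : Type*} [Group G] {A : ι → Subgroup G}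
    (hind : iSupIndep A)
    (hcomm : ∀ i j, i ≠ j → ∀ x ∈ A i, ∀ y ∈ A j, Commute x y)
    {S₁ S₂ : Set ι} (hS : Disjoint S₁ S₂) :
    Disjoint (⨆ i ∈ S₁, A i) (⨆ i ∈ S₂, A i) := by
  classical
  rw [Subgroup.disjoint_def]
  intro x hx1 hx2
  obtain ⟨s, f, hf, hfs, hxf⟩ := mem_biSup_exists_noncommProd hcomm hx1
  obtain ⟨t, g, hg, hgs, hxg⟩ := mem_biSup_exists_noncommProd hcomm hx2
  set u := s ∪ t with hu
  have cff : ((↑u : Set ι)).Pairwise (Function.onFun Commute f) :=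
    fun i _ j _ hij => hcomm i j hij _ (hf i) _ (hf j)
  have cgg : ((↑u : Set ι)).Pairwise (Function.onFun Commute g) :=
    fun i _ j _ hij => hcomm i j hij _ (hg i) _ (hg j)
  have cfi : ((↑u : Set ι)).Pairwise (Function.onFun Commute (fun i => (f i)⁻¹)) :=
    fun i _ j _ hij => ((hcomm i j hij _ (hf i) _ (hf j)).inv_left).inv_right
  have e1 : x = u.noncommProd f cff :=
    hxf.trans (noncommProd_eq_of_support Finset.subset_union_left f cff
      (fun i _ hi => by by_contra hne; exact hi (hfs i hne).1)).symm
  have e2 : x = u.noncommProd g cgg :=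
    hxg.trans (noncommProd_eq_of_support Finset.subset_union_right g cgg
      (fun i _ hi => by by_contra hne; exact hi (hgs i hne).1)).symm
  have hinv : u.noncommProd (fun i => (f i)⁻¹) cfi = (u.noncommProd f cff)⁻¹ := by
    have cif : ((↑u : Set ι)).Pairwise (fun a b => Commute ((f a)⁻¹) (f b)) :=
      fun i _ j _ hij => (hcomm i j hij _ (hf i) _ (hf j)).inv_left
    have hd := Finset.noncommProd_mul_distrib (s := u) f (fun i => (f i)⁻¹) cff cfi cif
    have h1 : u.noncommProd (f * fun i => (f i)⁻¹)
        (Finset.noncommProd_mul_distrib_aux cff cfi cif) = 1 := by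
      rw [Finset.noncommProd_eq_pow_card u (f * fun i => (f i)⁻¹) _ 1 (fun i _ => by simp),
        one_pow]
    exact eq_inv_of_mul_eq_one_right (hd.symm.trans h1)
  have hmem : ∀ i, (f i)⁻¹ * g i ∈ A i := fun i => mul_mem (inv_mem (hf i)) (hg i)
  have chh : ((↑u : Set ι)).Pairwise (Function.onFun Commute (fun i => (f i)⁻¹ * g i)) :=
    fun i _ j _ hij => hcomm i j hij _ (hmem i) _ (hmem j)
  have cgfi : ((↑u : Set ι)).Pairwise (fun a b => Commute (g a) ((f b)⁻¹)) :=
    fun i hi j hj hij => (hcomm i j hij _ (hg i) _ (hf j)).inv_right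
  have hprod : u.noncommProd (fun i => (f i)⁻¹ * g i) chh = 1 := by
    calc u.noncommProd (fun i => (f i)⁻¹ * g i) chh
        = u.noncommProd (fun i => (f i)⁻¹) cfi * u.noncommProd g cgg :=
          Finset.noncommProd_mul_distrib (fun i => (f i)⁻¹) g cfi cgg cgfi
      _ = x⁻¹ * x := by rw [hinv, ← e1, ← e2]
      _ = 1 := inv_mul_cancel x
  have hone := Subgroup.eq_one_of_noncommProd_eq_one_of_iSupIndep u _ chh A hind
    (fun i _ => hmem i) hprod
  have hf1 : ∀ i, f i = 1 := by
    intro i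
    by_contra hne
    have hiu : i ∈ u := Finset.mem_union_left _ (hfs i hne).1
    have hfg : f i = g i := inv_mul_eq_one.mp (hone i hiu)
    have hgne : g i ≠ 1 := hfg ▸ hne
    exact Set.disjoint_left.mp hS (hfs i hne).2 (hgs i hgne).2
  rw [hxf]
  exact (Finset.noncommProd_eq_pow_card s f _ 1 (fun i _ => hf1 i)).trans (one_pow _)


/-- `W` is a wreath-like product of `A₀` and `B` corresponding to the action `B ↷ I`. -/
def IsWreathLike {W B : Type*} [Group W] [Group B] (I : Type*) [MulAction B I]
    (A₀ : Type*) [Group A₀] (ε : W →* B) (A : I → Subgroup W) : Prop :=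
  Function.Surjective ε ∧
  (∀ i, Nonempty (↥(A i) ≃* A₀)) ∧
  (⨆ i, A i) = ε.ker ∧
  iSupIndep A ∧
  (∀ i j, i ≠ j → ∀ x ∈ A i, ∀ y ∈ A j, Commute x y) ∧
  (∀ (w : W) (i : I), (A i).map (MulAut.conj w).toMonoidHom = A (ε w • i))

/-- let `W` be a regular wreath-like product of `A₀` and `B` (a wreath-like
product for the left-regular action `B ↷ B`, so the base is `⊕_{b∈B} A_b`), and let
`V ≤ W` contain the base.  Fix a right transversal `T` of `D = ε(V)` in `B` (encoded by
`Subgroup.IsComplement ↑(V.map ε) T`: every element of `B` is uniquely `d * t`), and set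
`C_d = ⊕_{t∈T} A_{dt}`, i.e. `C d = ⨆ t ∈ T, A (d*t)`.  Then
`A^{(B)} = ⊕_{d∈D} C_d` (the `C_d`, `d ∈ D`, are independent, with pairwise commuting
distinct summands, and their join is the base) and `v C_d v⁻¹ = C_{ε(v)d}` for all
`v ∈ V`, `d ∈ D`; hence `V` is a regular wreath-like product of `C = ⊕_{|B:D|} A₀`
and `D = ε(V)`. -/
theorem subgroup_containing_base_regular_wreathLike
    {W B A₀ : Type*} [Group W] [Group B] [Group A₀]
    (ε : W →* B) (A : B → Subgroup W) (h : IsWreathLike B A₀ ε A)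
    (V : Subgroup W) (hV : ∀ b, A b ≤ V)
    (T : Set B) (hT : Subgroup.IsComplement ((V.map ε : Subgroup B) : Set B) T) :
    ((⨆ b : B, A b) = ⨆ d : ↥(V.map ε), ⨆ t ∈ T, A ((d : B) * t)) ∧
    iSupIndep (fun d : ↥(V.map ε) => ⨆ t ∈ T, A ((d : B) * t)) ∧
    (∀ d₁ d₂ : ↥(V.map ε), d₁ ≠ d₂ →
      ∀ x ∈ ⨆ t ∈ T, A ((d₁ : B) * t), ∀ y ∈ ⨆ t ∈ T, A ((d₂ : B) * t), Commute x y) ∧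
    (∀ v ∈ V, ∀ d ∈ V.map ε,
      (⨆ t ∈ T, A (d * t)).map (MulAut.conj v).toMonoidHom = ⨆ t ∈ T, A (ε v * d * t)) := by
  obtain ⟨hsurj, hiso, hker, hind, hcomm, hconj⟩ := h
  -- injectivity of (d, t) ↦ d * t
  have hinj : ∀ (d₁ d₂ : B), d₁ ∈ V.map ε → d₂ ∈ V.map ε → ∀ t₁ ∈ T, ∀ t₂ ∈ T,
      d₁ * t₁ = d₂ * t₂ → d₁ = d₂ ∧ t₁ = t₂ := by
    intro d₁ d₂ hd₁ hd₂ t₁ ht₁ t₂ ht₂ heq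
    have := hT.1 (a₁ := (⟨d₁, hd₁⟩, ⟨t₁, ht₁⟩)) (a₂ := (⟨d₂, hd₂⟩, ⟨t₂, ht₂⟩)) heq
    obtain ⟨h1, h2⟩ := Prod.ext_iff.mp this
    exact ⟨congrArg Subtype.val h1, congrArg Subtype.val h2⟩
  refine ⟨?_, ?_, ?_, ?_⟩
  · -- equality of joins
    apply le_antisymm
    · apply iSup_le
      intro b
      obtain ⟨⟨d, t⟩, hdt⟩ := hT.2 b
      simp only at hdt
      rw [← hdt]
      exact le_iSup_of_le ⟨(d : B), d.2⟩ (le_iSup₂_of_le (t : B) t.2 le_rfl)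
    · exact iSup_le fun d => iSup₂_le fun t ht => le_iSup A ((d : B) * t)
  · -- independence
    intro d
    show Disjoint (⨆ t ∈ T, A ((d : B) * t))
      (⨆ (d' : ↥(V.map ε)) (_ : d' ≠ d), ⨆ t ∈ T, A ((d' : B) * t))
    have hCd : (⨆ t ∈ T, A ((d : B) * t)) = ⨆ b ∈ (fun t => (d : B) * t) '' T, A b := by
      rw [iSup_image]
    have hRest : (⨆ (d' : ↥(V.map ε)) (_ : d' ≠ d), ⨆ t ∈ T, A ((d' : B) * t)) =
        ⨆ b ∈ (⋃ (d' : ↥(V.map ε)) (_ : d' ≠ d), (fun t => (d' : B) * t) '' T), A b := by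
      simp only [iSup_iUnion, iSup_image]
    rw [hCd, hRest]
    apply disjoint_biSup_of_disjoint hind hcomm
    rw [Set.disjoint_left]
    rintro b ⟨t, ht, rfl⟩ hb
    simp only [Set.mem_iUnion] at hb
    obtain ⟨d', hne, t', ht', heq⟩ := hb
    exact hne (Subtype.ext (hinj _ _ d'.2 d.2 t' ht' t ht heq).1)
  · -- pairwise commuting
    intro d₁ d₂ hne x hx y hy
    have key : ∀ t₁ ∈ T, ∀ t₂ ∈ T, ∀ x ∈ A ((d₁ : B) * t₁), ∀ y ∈ A ((d₂ : B) * t₂),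
        Commute x y := by
      intro t₁ ht₁ t₂ ht₂
      refine hcomm _ _ ?_
      intro hc
      exact hne (Subtype.ext (hinj _ _ d₁.2 d₂.2 t₁ ht₁ t₂ ht₂ hc).1)
    have stepA : ∀ t₁ ∈ T, (⨆ t ∈ T, A ((d₂ : B) * t)) ≤
        Subgroup.centralizer (A ((d₁ : B) * t₁) : Set W) := by
      intro t₁ ht₁
      refine iSup₂_le fun t₂ ht₂ z hz => Subgroup.mem_centralizer_iff.2 fun w hw => ?_
      exact key t₁ ht₁ t₂ ht₂ w hw z hz
    have stepB : (⨆ t ∈ T, A ((d₁ : B) * t)) ≤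
        Subgroup.centralizer ((⨆ t ∈ T, A ((d₂ : B) * t) : Subgroup W) : Set W) := by
      refine iSup₂_le fun t₁ ht₁ z hz => Subgroup.mem_centralizer_iff.2 fun w hw => ?_
      exact (Subgroup.mem_centralizer_iff.1 (stepA t₁ ht₁ hw) z hz).symm
    exact (Subgroup.mem_centralizer_iff.1 (stepB hx) y hy).symm
  · -- conjugation
    intro v hv d hd
    rw [← iSup_subtype'' T (fun t => A (d * t)), ← iSup_subtype'' T (fun t => A (ε v * d * t)),
      Subgroup.map_iSup]
    refine iSup_congr fun t => ?_
    rw [hconj v (d * (t : B)), smul_eq_mul, ← mul_assoc]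
end

section
/- Let W be a regular wreath-like product of A and B, identify A with the summand A_1 of the base ⊕_{b∈B} A_b ≤ W, and let N be a normal subgroup of A. Then the quotient W/⟪N⟫ (by the normal closure of N in W) is a regular wreath-like product of A/N and B. -/
/-- let `W` be a regular wreath-like product of `A₀` and `B` (so the copy
of the abstract group `A₀` sitting as the summand `A 1` of the base is "A"), and let
`N ≤ A 1` be a subgroup that is normal in `A 1`.  Then the quotient of `W` by the
normal closure of `N` in `W` is a regular wreath-like product of `A/N` and `B`,
where `A/N` is realized as the quotient `↥(A 1) ⧸ N.subgroupOf (A 1)`. -/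
theorem quotient_by_normalClosure_isWreathLike
    {W B A₀ : Type*} [Group W] [Group B] [Group A₀]
    (ε : W →* B) (A : B → Subgroup W) (h : IsWreathLike B A₀ ε A)
    (N : Subgroup W) (hN : N ≤ A 1) [hNnormal : (N.subgroupOf (A 1)).Normal] :
    ∃ ε' : (W ⧸ Subgroup.normalClosure (N : Set W)) →* B,
      (∀ w : W, ε' (QuotientGroup.mk w) = ε w) ∧
      ∃ A' : B → Subgroup (W ⧸ Subgroup.normalClosure (N : Set W)),
        IsWreathLike B (↥(A 1) ⧸ N.subgroupOf (A 1)) ε' A' := by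
  classical
  obtain ⟨hsurj, hiso, hker, hind, hcomm, hconj⟩ := h
  set M : Subgroup W := Subgroup.normalClosure (N : Set W) with hMdef
  haveI hMnorm : M.Normal := Subgroup.normalClosure_normal
  set σ : B → W := Function.surjInv hsurj with hσdef
  have hσ : ∀ b, ε (σ b) = b := fun b => Function.surjInv_eq hsurj b
  set N' : B → Subgroup W := fun b => N.map (MulAut.conj (σ b)).toMonoidHom with hN'def
  -- every element of each A c normalizes N
  have hgen : ∀ c, ∀ a ∈ A c, ∀ n ∈ N, a * n * a⁻¹ ∈ N := by
    intro c a ha n hn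
    by_cases hc : c = 1
    · subst hc
      have := hNnormal.conj_mem ⟨n, hN hn⟩ (Subgroup.mem_subgroupOf.mpr hn) ⟨a, ha⟩
      simpa using Subgroup.mem_subgroupOf.mp this
    · have hcomm' := hcomm c 1 hc a ha n (hN hn)
      have he : a * n * a⁻¹ = n := by rw [hcomm'.eq]; group
      rw [he]; exact hn
  have hker_norm : ε.ker ≤ Subgroup.normalizer (N : Set W) := by
    rw [← hker]
    refine iSup_le fun c a ha => Subgroup.mem_normalizer_iff.mpr fun n =>
      ⟨fun hn => hgen c a ha n hn, fun hn => ?_⟩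
    have h2 := hgen c a⁻¹ (inv_mem ha) _ hn
    simpa [mul_assoc] using h2
  have hmapk : ∀ k ∈ Subgroup.normalizer (N : Set W), N.map (MulAut.conj k).toMonoidHom = N := by
    intro k hk
    ext x
    simp only [Subgroup.mem_map, MulEquiv.coe_toMonoidHom, MulAut.conj_apply]
    constructor
    · rintro ⟨n, hn, rfl⟩
      exact (Subgroup.mem_normalizer_iff.mp hk n).mp hn
    · intro hx
      refine ⟨k⁻¹ * x * k, ?_, by group⟩
      have := (Subgroup.mem_normalizer_iff.mp (inv_mem hk) x).mp hx
      simpa using this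
  have hconjmul : ∀ (a b : W) (H : Subgroup W),
      H.map (MulAut.conj (a * b)).toMonoidHom
        = (H.map (MulAut.conj b).toMonoidHom).map (MulAut.conj a).toMonoidHom := by
    intro a b H
    rw [Subgroup.map_map]
    congr 1
    ext x
    simp only [MonoidHom.comp_apply, MulEquiv.coe_toMonoidHom, MulAut.conj_apply]
    group
  have hNconj : ∀ u : W, N.map (MulAut.conj u).toMonoidHom = N' (ε u) := by
    intro u
    have hk : (σ (ε u))⁻¹ * u ∈ ε.ker := by
      simp [MonoidHom.mem_ker, hσ]
    have hu : u = σ (ε u) * ((σ (ε u))⁻¹ * u) := (mul_inv_cancel_left _ _).symm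
    conv_lhs => rw [hu]
    rw [hconjmul, hmapk _ (hker_norm hk)]
  have hN1 : N' 1 = N := by
    have h1 := hNconj 1
    rw [map_one ε] at h1
    rw [← h1]
    exact hmapk 1 (one_mem _)
  have hN'A : ∀ b, N' b ≤ A b := by
    intro b
    have hc := hconj (σ b) 1
    rw [hσ, smul_eq_mul, mul_one] at hc
    exact hc ▸ Subgroup.map_mono hN
  have hkerA : ∀ b, A b ≤ ε.ker := fun b => hker ▸ le_iSup A b
  have hSnormal : (⨆ b, N' b).Normal := by
    constructor
    intro x hx g
    have hle : (⨆ b, N' b).map (MulAut.conj g).toMonoidHom ≤ ⨆ b, N' b := by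
      rw [Subgroup.map_iSup]
      refine iSup_le fun b => ?_
      rw [show N' b = N.map (MulAut.conj (σ b)).toMonoidHom from rfl, ← hconjmul, hNconj]
      exact le_iSup N' _
    have hm : (MulAut.conj g).toMonoidHom x ∈ (⨆ b, N' b).map (MulAut.conj g).toMonoidHom :=
      Subgroup.mem_map_of_mem _ hx
    simpa using hle hm
  have hM : M = ⨆ b, N' b := by
    haveI := hSnormal
    apply le_antisymm
    · refine Subgroup.normalClosure_le_normal ?_
      intro x hx
      exact (hN1 ▸ le_iSup N' 1 : N ≤ ⨆ b, N' b) hx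
    · refine iSup_le fun b => ?_
      rintro x ⟨n, hn, rfl⟩
      simpa using Subgroup.normalClosure_normal.conj_mem n (Subgroup.subset_normalClosure hn) (σ b)
  set K : B → Subgroup W := fun b => ⨆ c, ⨆ _ : c ≠ b, A c with hKdef
  have hcent : ∀ b, ∀ k ∈ K b, ∀ a ∈ A b, a * k = k * a := by
    intro b k hk
    have hle : K b ≤ Subgroup.centralizer (A b : Set W) := by
      refine iSup_le fun c => iSup_le fun hc x hx => ?_
      exact Subgroup.mem_centralizer_iff.mpr fun g hg => ((hcomm c b hc x hx g hg).symm).eq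
    exact fun a ha => Subgroup.mem_centralizer_iff.mp (hle hk) a ha
  have hfact : ∀ b, ∀ x ∈ (⨆ c, N' c), ∃ n ∈ N' b, ∃ k ∈ K b, x = n * k := by
    intro b x hx
    refine Subgroup.iSup_induction N' (C := fun x => ∃ n ∈ N' b, ∃ k ∈ K b, x = n * k) hx ?_ ?_ ?_
    · intro i x hxi
      by_cases hib : i = b
      · exact ⟨x, hib ▸ hxi, 1, one_mem _, (mul_one x).symm⟩
      · exact ⟨1, one_mem _, x,
          le_iSup₂ (f := fun c (_ : c ≠ b) => A c) i hib (hN'A i hxi), (one_mul x).symm⟩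
    · exact ⟨1, one_mem _, 1, one_mem _, (one_mul 1).symm⟩
    · rintro x y ⟨n1, hn1, k1, hk1, rfl⟩ ⟨n2, hn2, k2, hk2, rfl⟩
      refine ⟨n1 * n2, mul_mem hn1 hn2, k1 * k2, mul_mem hk1 hk2, ?_⟩
      have hc2 : Commute k1 n2 := (hcent b k1 hk1 n2 (hN'A b hn2)).symm
      exact hc2.mul_mul_mul_comm n1 k2
  have hdisj : ∀ b (x : W), x ∈ A b → x ∈ K b → x = 1 := by
    intro b x hx hk
    exact (Subgroup.disjoint_def.mp (hind b)) hx hk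
  have hMA : ∀ b, ∀ x ∈ M, x ∈ A b → x ∈ N' b := by
    intro b x hxM hxA
    rw [hM] at hxM
    obtain ⟨n, hn, k, hk, rfl⟩ := hfact b x hxM
    have hkA : k ∈ A b := by
      have he : k = n⁻¹ * (n * k) := by group
      rw [he]; exact mul_mem (inv_mem (hN'A b hn)) hxA
    rw [hdisj b k hkA hk, mul_one]
    exact hn
  -- the quotient data
  have hNker : (N : Set W) ⊆ (ε.ker : Set W) := fun x hx => (hkerA 1) (hN hx)
  have hMker : M ≤ ε.ker := Subgroup.normalClosure_le_normal hNker
  set π : W →* W ⧸ M := QuotientGroup.mk' M with hπdef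
  have hπsurj : Function.Surjective π := QuotientGroup.mk'_surjective M
  set ε' : (W ⧸ M) →* B :=
    QuotientGroup.lift M ε (fun x hx => MonoidHom.mem_ker.mp (hMker hx)) with hε'def
  have hε'2 : ∀ w, ε' (π w) = ε w := fun w => rfl
  set A' : B → Subgroup (W ⧸ M) := fun b => (A b).map π with hA'def
  have hπconj : ∀ (w : W) (H : Subgroup W),
      (H.map π).map (MulAut.conj (π w)).toMonoidHom = (H.map (MulAut.conj w).toMonoidHom).map π := by
    intro w H
    have hcomp : (MulAut.conj (π w)).toMonoidHom.comp π = π.comp (MulAut.conj w).toMonoidHom := by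
      ext x
      simp [MulAut.conj_apply]
    rw [Subgroup.map_map, Subgroup.map_map, hcomp]
  have hconj' : ∀ (w' : W ⧸ M) (i : B),
      (A' i).map (MulAut.conj w').toMonoidHom = A' (ε' w' • i) := by
    intro w' i
    obtain ⟨w, rfl⟩ := hπsurj w'
    rw [show A' i = (A i).map π from rfl, hπconj w (A i), hconj w i, hε'2 w]
  have hsurj' : Function.Surjective ε' := by
    intro b
    exact ⟨π (σ b), (hε'2 (σ b)).trans (hσ b)⟩
  have hker' : (⨆ b, A' b) = ε'.ker := by
    have h1 : (⨆ b, A' b) = (ε.ker).map π := by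
      rw [← hker, Subgroup.map_iSup]
    rw [h1]
    ext x
    constructor
    · rintro ⟨w, hw, rfl⟩
      exact MonoidHom.mem_ker.mpr ((hε'2 w).trans (MonoidHom.mem_ker.mp hw))
    · intro hx
      obtain ⟨w, rfl⟩ := hπsurj x
      exact ⟨w, MonoidHom.mem_ker.mpr ((hε'2 w).symm.trans (MonoidHom.mem_ker.mp hx)),
        rfl⟩
  have hind' : iSupIndep A' := by
    intro b
    rw [Subgroup.disjoint_def]
    intro x hx1 hx2
    have hKmap : (K b).map π = ⨆ (c) (_ : c ≠ b), A' c := by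
      rw [Subgroup.map_iSup]
      exact iSup_congr fun c => Subgroup.map_iSup _ _
    rw [← hKmap] at hx2
    obtain ⟨u, hu, rfl⟩ := hx1
    obtain ⟨v, hv, hveq⟩ := hx2
    have h0 : π (u * v⁻¹) = 1 := by
      rw [map_mul, map_inv, hveq]
      simp
    have hm : u * v⁻¹ ∈ ⨆ c, N' c := by
      rw [← hM]
      exact (QuotientGroup.eq_one_iff _).mp h0
    obtain ⟨n, hn, k, hk, heq⟩ := hfact b _ hm
    have hu2 : u = n * (k * v) := by
      rw [← mul_assoc, ← heq]; group
    have hkv : k * v ∈ K b := mul_mem hk hv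
    have hkvA : k * v ∈ A b := by
      have he : k * v = n⁻¹ * u := by rw [hu2]; group
      rw [he]; exact mul_mem (inv_mem (hN'A b hn)) hu
    have hkv1 : k * v = 1 := hdisj b _ hkvA hkv
    have huN : u ∈ N' b := by rw [hu2, hkv1, mul_one]; exact hn
    have huM : u ∈ M := by rw [hM]; exact (le_iSup N' b) huN
    exact (QuotientGroup.eq_one_iff _).mpr huM
  have hcomm' : ∀ i j, i ≠ j → ∀ x ∈ A' i, ∀ y ∈ A' j, Commute x y := by
    rintro i j hij x ⟨u, hu, rfl⟩ y ⟨v, hv, rfl⟩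
    exact (hcomm i j hij u hu v hv).map π
  have hkerf : (π.comp (A 1).subtype).ker = N.subgroupOf (A 1) := by
    ext x
    simp only [MonoidHom.mem_ker, MonoidHom.comp_apply, Subgroup.coe_subtype,
      Subgroup.mem_subgroupOf]
    rw [show π (↑x) = QuotientGroup.mk (↑x : W) from rfl, QuotientGroup.eq_one_iff]
    constructor
    · intro hxM
      have := hMA 1 _ hxM x.2
      rwa [hN1] at this
    · intro hxN
      exact Subgroup.subset_normalClosure hxN
  have e1 : ((A 1) ⧸ N.subgroupOf (A 1)) ≃* A' 1 := by
    have h2 : (π.comp (A 1).subtype).range = A' 1 := by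
      rw [MonoidHom.range_comp, Subgroup.range_subtype]
    exact ((QuotientGroup.quotientMulEquivOfEq hkerf.symm).trans
      (QuotientGroup.quotientKerEquivRange _)).trans (MulEquiv.subgroupCongr h2)
  have hiso' : ∀ b, Nonempty (↥(A' b) ≃* ((A 1) ⧸ N.subgroupOf (A 1))) := by
    intro b
    have h6 := hconj' ((π (σ b))⁻¹) b
    rw [map_inv ε' (π (σ b)), hε'2, hσ, smul_eq_mul, inv_mul_cancel] at h6
    exact ⟨(MulEquiv.subgroupMap (MulAut.conj ((π (σ b))⁻¹)) (A' b)).trans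
      ((MulEquiv.subgroupCongr h6).trans e1.symm)⟩
  exact ⟨ε', fun w => hε'2 w, A', hsurj', hiso', hker', hind', hcomm', hconj'⟩
end

section
/- Let W be a wreath-like product of A and B over an action B ↷ I, with B torsion-free and all point stabilizers Stab_B(i) almost malnormal in B. Then for every nontrivial element a of the base A^{(I)} and every i in the support of a, the image under ε of the centralizer C_W(a) is contained in Stab_B(i). -/
def Subgroup.IsAlmostMalnormal {G : Type*} [Group G] (H : Subgroup G) : Prop :=
  ∀ g : G, g ∉ H → ((H ⊓ H.map (MulAut.conj g).toMonoidHom : Subgroup G) : Set G).Finite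

/-- `g ^ k` commutes with `g`, so it lies in `H ∩ gHg⁻¹`, which is finite if `g ∉ H`. -/
theorem Subgroup.IsAlmostMalnormal.mem_of_pow_mem {G : Type*} [Group G] {H : Subgroup G}
    (hH : H.IsAlmostMalnormal) (htf : ∀ g : G, g ≠ 1 → ¬IsOfFinOrder g)
    {g : G} {k : ℕ} (hk : k ≠ 0) (hgk : g ^ k ∈ H) : g ∈ H := by
  by_contra hg
  have hmem : g ^ k ∈ H ⊓ H.map (MulAut.conj g).toMonoidHom :=
    ⟨hgk, Subgroup.mem_map_equiv.mpr <| by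
      rwa [MulAut.conj_symm_apply, mul_assoc, ← pow_succ, pow_succ', inv_mul_cancel_left]⟩
  have hfin : IsOfFinOrder (g ^ k) :=
    finite_powers.mp <| (hH g hg).subset <| Submonoid.powers_le.mpr hmem
  exact htf g (by rintro rfl; exact hg H.one_mem) (hfin.of_pow hk)

theorem MulAction.exists_pow_smul_eq_of_forall_pow_smul_mem {G α : Type*} [Group G]
    [MulAction G α] {g : G} {a : α} {s : Set α} (hs : s.Finite) (hmem : ∀ n : ℕ, g ^ n • a ∈ s) :
    ∃ k ≠ 0, g ^ k • a = a := by
  obtain ⟨m, n, hmn, heq⟩ := hs.exists_lt_map_eq_of_forall_mem hmem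
  refine ⟨n - m, by omega, smul_left_cancel (g ^ m) ?_⟩
  rw [smul_smul, ← pow_add, Nat.add_sub_cancel' hmn.le, heq]

section WreathLike

variable {W B : Type*} [Group W] [Group B] {I : Type*} [MulAction B I]

/-- For `a` in the base, `a(i) ≠ 1` iff `a` is not generated by the summands `A j`, `j ≠ i`. -/
def wreathSupport (A : I → Subgroup W) (a : W) : Set I :=
  {i | a ∉ ⨆ j ∈ ({i}ᶜ : Set I), A j}

theorem wreathSupport_finite {A : I → Subgroup W} {a : W} (ha : a ∈ ⨆ i, A i) :
    (wreathSupport A a).Finite := by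
  have hdir : Directed (· ≤ ·) fun s : Finset I => ⨆ i ∈ s, A i :=
    Monotone.directed_le fun s t hst => biSup_mono fun _ hi => Finset.mem_of_subset hst hi
  rw [iSup_eq_iSup_finset, Subgroup.mem_iSup_of_directed hdir] at ha
  obtain ⟨s, hs⟩ := ha
  refine s.finite_toSet.subset fun i hi => by_contra fun his => hi ?_
  have hle : (⨆ j ∈ s, A j) ≤ ⨆ j ∈ ({i}ᶜ : Set I), A j :=
    biSup_mono fun j hj hji => his (Set.mem_singleton_iff.mp hji ▸ hj)
  exact hle hs

theorem map_conj_iSup_compl {ε : W →* B} {A : I → Subgroup W}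
    (hconj : ∀ (w : W) (i : I), (A i).map (MulAut.conj w).toMonoidHom = A (ε w • i))
    (w : W) (i : I) :
    (⨆ j ∈ ({i}ᶜ : Set I), A j).map (MulAut.conj w).toMonoidHom =
      ⨆ j ∈ ({ε w • i}ᶜ : Set I), A j := by
  simp only [Subgroup.map_iSup, hconj]
  rw [← Set.smul_set_singleton, ← Set.smul_set_compl, ← Set.image_smul, iSup_image]

theorem smul_mem_wreathSupport {ε : W →* B} {A : I → Subgroup W}
    (hconj : ∀ (w : W) (i : I), (A i).map (MulAut.conj w).toMonoidHom = A (ε w • i))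
    {a c : W} (hc : c ∈ Subgroup.centralizer {a}) {i : I} (hi : i ∈ wreathSupport A a) :
    ε c • i ∈ wreathSupport A a := by
  intro ha
  rw [← map_conj_iSup_compl hconj, Subgroup.mem_map_equiv, MulAut.conj_symm_apply, mul_assoc,
    ← Subgroup.mem_centralizer_singleton_iff.mp hc, inv_mul_cancel_left] at ha
  exact hi ha

theorem pow_smul_mem_wreathSupport {ε : W →* B} {A : I → Subgroup W}
    (hconj : ∀ (w : W) (i : I), (A i).map (MulAut.conj w).toMonoidHom = A (ε w • i))
    {a c : W} (hc : c ∈ Subgroup.centralizer {a}) {i : I} (hi : i ∈ wreathSupport A a) (n : ℕ) :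
    ε c ^ n • i ∈ wreathSupport A a := by
  induction n with
  | zero => simpa using hi
  | succ n ih =>
    rw [pow_succ', mul_smul]
    exact smul_mem_wreathSupport hconj hc ih

end WreathLike

theorem centralizer_image_le_stabilizer_general
    {W B A₀ : Type*} [Group W] [Group B] [Group A₀] {I : Type*} [MulAction B I]
    (ε : W →* B) (A : I → Subgroup W) (h : IsWreathLike I A₀ ε A)
    (htf : ∀ b : B, b ≠ 1 → ¬IsOfFinOrder b)
    (hmal : ∀ (i : I), ∀ g : B, g ∉ MulAction.stabilizer B i →
      (((MulAction.stabilizer B i ⊓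
          (MulAction.stabilizer B i).map (MulAut.conj g).toMonoidHom : Subgroup B)) :
        Set B).Finite)
    (a : W) (ha : a ∈ ε.ker)
    (i : I) (hi : a ∉ ⨆ j ∈ ({i}ᶜ : Set I), A j) :
    ∀ c ∈ Subgroup.centralizer ({a} : Set W), ε c ∈ MulAction.stabilizer B i := by
  obtain ⟨-, -, hker, -, -, hconj⟩ := h
  intro c hc
  obtain ⟨k, hk, hfix⟩ := MulAction.exists_pow_smul_eq_of_forall_pow_smul_mem
    (wreathSupport_finite (hker ▸ ha)) (pow_smul_mem_wreathSupport hconj hc hi)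
  exact Subgroup.IsAlmostMalnormal.mem_of_pow_mem (hmal i) htf hk hfix

/-- let `W ∈ WR(A₀, B ↷ I)` with `B` torsion-free and all point stabilizers
`Stab_B(i)` almost malnormal in `B` (i.e. `Stab_B(i) ∩ g Stab_B(i) g⁻¹` is finite for
all `g ∉ Stab_B(i)`).  For every nontrivial element `a` of the base `A^{(I)} = ker ε`
and every `i` in the support of `a` (encoded: `a` does not lie in the restricted direct
product of the summands `A j`, `j ≠ i`), the image under `ε` of the centralizer
`C_W(a)` is contained in `Stab_B(i)`. -/
theorem centralizer_image_le_stabilizer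
    {W B A₀ : Type*} [Group W] [Group B] [Group A₀] {I : Type*} [MulAction B I]
    (ε : W →* B) (A : I → Subgroup W) (h : IsWreathLike I A₀ ε A)
    (htf : ∀ b : B, b ≠ 1 → ¬IsOfFinOrder b)
    (hmal : ∀ (i : I), ∀ g : B, g ∉ MulAction.stabilizer B i →
      (((MulAction.stabilizer B i ⊓
          (MulAction.stabilizer B i).map (MulAut.conj g).toMonoidHom : Subgroup B)) :
        Set B).Finite)
    (a : W) (ha : a ∈ ε.ker) (hane : a ≠ 1)
    (i : I) (hi : a ∉ ⨆ j ∈ ({i}ᶜ : Set I), A j) :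
    ∀ c ∈ Subgroup.centralizer ({a} : Set W), ε c ∈ MulAction.stabilizer B i :=
  centralizer_image_le_stabilizer_general ε A h htf hmal a ha i hi
end

section
/- Let W be a regular wreath-like product of an abelian group A and a group B, with section σ: B → W of the canonical map ε: W → B. For a ∈ A^{(B)} and X ⊆ B define π_X(a) = ∏_{x∈X} (σ(x)⁻¹ a σ(x))(1). Then for any a ∈ A^{(B)}, b ∈ B, and w ∈ W, one has π_{bR}(w⁻¹ a w) = π_{ε(w)bR}(a) for every subgroup R ≤ B; consequently the set N_R = { a ∈ A^{(B)} : π_{bR}(a) = 1 for all b ∈ B } is a normal subgroup of W. -/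
open Pointwise

/-- `W` is a regular wreath-like product of the abelian group `A` (written additively)
and the group `B`: `ε : W → B` is the canonical surjection, and `ι` identifies the
base `A^{(B)} = ⊕_{b∈B} A` (viewed as a multiplicative group) with `ker ε`, the
conjugation action of `w ∈ W` on the base shifting indices by left multiplication
by `ε w`. -/
def IsRegularWreathLikeAb (A : Type*) [AddCommGroup A] (B : Type*) [Group B]
    (W : Type*) [Group W] (ε : W →* B)
    (ι : Multiplicative (DirectSum B fun _ : B => A) →* W) : Prop :=
  Function.Surjective ε ∧ Function.Injective ι ∧ ι.range = ε.ker ∧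
  ∀ (w : W) (f : DirectSum B fun _ : B => A),
    ∃ f' : DirectSum B fun _ : B => A,
      ι (Multiplicative.ofAdd f') = w * ι (Multiplicative.ofAdd f) * w⁻¹ ∧
      ∀ b : B, f' (ε w * b) = f b

/-
Conjugation by `w` acts on the base `⊕_{b ∈ B} A` by translating coordinates by `ε w`, and
injectivity of `ι` pins down the conjugate: `(w⁻¹ a w)(x) = a(ε(w) x)`. Summing over the coset
`bR` and translating the index set gives `π_{bR}(w⁻¹ a w) = π_{ε(w)bR}(a)`. Hence the common
kernel `N_R` of the additive maps `π_{bR}` is carried into itself by conjugation, since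
`ε(w)⁻¹ b R` runs over all left cosets of `R` as `b` does.
-/

theorem finsum_mem_smul_set {M G α : Type*} [AddCommMonoid M] [Group G] [MulAction G α]
    (f : α → M) (c : G) (s : Set α) :
    ∑ᶠ y ∈ c • s, f y = ∑ᶠ x ∈ s, f (c • x) :=
  finsum_mem_image (MulAction.injective c).injOn

namespace DirectSum

variable {ι A : Type*} [AddCommMonoid A]

/-- The paper's `π_s`, written additively. -/
noncomputable def finsumOn (s : Set ι) : (⨁ _ : ι, A) →+ A where
  toFun f := ∑ᶠ x ∈ s, f x
  map_zero' := by simp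
  map_add' f g := by
    simp only [add_apply]
    exact finsum_mem_add_distrib' ((DFinsupp.finite_support f).inter_of_right s)
      ((DFinsupp.finite_support g).inter_of_right s)

theorem finsumOn_apply (s : Set ι) (f : ⨁ _ : ι, A) : finsumOn s f = ∑ᶠ x ∈ s, f x :=
  rfl

end DirectSum

open DirectSum

/-- The paper's `N_R`, as an additive subgroup of the base. -/
noncomputable def cosetSumKer {A B : Type*} [AddCommGroup A] [Group B] (R : Subgroup B) :
    AddSubgroup (⨁ _ : B, A) :=
  ⨅ b : B, (finsumOn (b • (R : Set B))).ker

theorem mem_cosetSumKer {A B : Type*} [AddCommGroup A] [Group B] {R : Subgroup B}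
    {f : ⨁ _ : B, A} : f ∈ cosetSumKer R ↔ ∀ b : B, ∑ᶠ x ∈ b • (R : Set B), f x = 0 := by
  simp only [cosetSumKer, AddSubgroup.mem_iInf, AddMonoidHom.mem_ker, finsumOn_apply]

namespace IsRegularWreathLikeAb

variable {A B W : Type*} [AddCommGroup A] [Group B] [Group W] {ε : W →* B}
  {ι : Multiplicative (⨁ _ : B, A) →* W}

theorem apply_mul_of_conj (h : IsRegularWreathLikeAb A B W ε ι) {f f' : ⨁ _ : B, A} {w : W}
    (hw : ι (Multiplicative.ofAdd f') = w * ι (Multiplicative.ofAdd f) * w⁻¹) (b : B) :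
    f' (ε w * b) = f b := by
  obtain ⟨g, hg, hgf⟩ := h.2.2.2 w f
  have hfg : f' = g := h.2.1 (hw.trans hg.symm)
  rw [hfg, hgf]

theorem finsum_mem_of_conj_inv (h : IsRegularWreathLikeAb A B W ε ι) {f f' : ⨁ _ : B, A}
    {w : W} (hw : ι (Multiplicative.ofAdd f') = w⁻¹ * ι (Multiplicative.ofAdd f) * w)
    (s : Set B) : ∑ᶠ x ∈ s, f' x = ∑ᶠ x ∈ ε w • s, f x := by
  have hf : ι (Multiplicative.ofAdd f) = w * ι (Multiplicative.ofAdd f') * w⁻¹ := by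
    rw [hw]; group
  rw [finsum_mem_smul_set]
  exact finsum_mem_congr rfl fun x _ => (h.apply_mul_of_conj hf x).symm

theorem normal_map_cosetSumKer (h : IsRegularWreathLikeAb A B W ε ι) (R : Subgroup B) :
    ((cosetSumKer R).toSubgroup.map ι).Normal := by
  refine ⟨?_⟩
  rintro _ ⟨g, hg, rfl⟩ w
  obtain ⟨f', hf', -⟩ := h.2.2.2 w g.toAdd
  have hw : ι (Multiplicative.ofAdd f') = w⁻¹⁻¹ * ι (Multiplicative.ofAdd g.toAdd) * w⁻¹ := by
    rw [hf', inv_inv]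
  have hf'_mem : f' ∈ cosetSumKer R := mem_cosetSumKer.2 fun b => by
    rw [h.finsum_mem_of_conj_inv hw, smul_smul]
    exact mem_cosetSumKer.1 hg _
  exact ⟨Multiplicative.ofAdd f', hf'_mem, hf'⟩

end IsRegularWreathLikeAb

/-- let `W` be a regular wreath-like product of an abelian group `A` and a
group `B`, and for `a ∈ A^{(B)}` and `X ⊆ B` let `π_X(a) = ∑_{x∈X} a(x)` (the sum of
the coordinates of `a` over `X`; in multiplicative notation,
`π_X(a) = ∏_{x∈X} (σ(x)⁻¹ a σ(x))(1)`).  Then for any `a ∈ A^{(B)}` (with coordinate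
function `f`), `b ∈ B` and `w ∈ W`, one has `π_{bR}(w⁻¹ a w) = π_{ε(w)bR}(a)` for
every subgroup `R ≤ B`; consequently the set
`N_R = { a ∈ A^{(B)} : π_{bR}(a) = 1 for all b ∈ B }` is a normal subgroup of `W`. -/
theorem pi_conj_and_NR_normal {A : Type*} [AddCommGroup A] {B : Type*} [Group B]
    {W : Type*} [Group W] (ε : W →* B)
    (ι : Multiplicative (DirectSum B fun _ : B => A) →* W)
    (h : IsRegularWreathLikeAb A B W ε ι) (R : Subgroup B) :
    (∀ (f f' : DirectSum B fun _ : B => A) (w : W) (b : B),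
      ι (Multiplicative.ofAdd f') = w⁻¹ * ι (Multiplicative.ofAdd f) * w →
      (∑ᶠ x ∈ b • (R : Set B), f' x) = ∑ᶠ x ∈ (ε w * b) • (R : Set B), f x) ∧
    ∃ NR : Subgroup W, NR.Normal ∧
      (NR : Set W) = ι '' (Multiplicative.ofAdd ''
        {f : DirectSum B fun _ : B => A | ∀ b : B, (∑ᶠ x ∈ b • (R : Set B), f x) = 0}) := by
  refine ⟨fun f f' w b hw => ?_, (cosetSumKer R).toSubgroup.map ι,
    h.normal_map_cosetSumKer R, ?_⟩
  · rw [h.finsum_mem_of_conj_inv hw, smul_smul]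
  · ext x
    simp only [Subgroup.coe_map, Set.image_image]
    exact ⟨fun ⟨g, hg, hx⟩ => ⟨g.toAdd, mem_cosetSumKer.1 hg, hx⟩,
      fun ⟨f, hf, hx⟩ => ⟨Multiplicative.ofAdd f, mem_cosetSumKer.2 hf, hx⟩⟩
end

section
/- Let W be a regular wreath-like product of a nontrivial abelian group A and a group B, let R ≤ B be a subgroup, and let N_R = { a ∈ A^{(B)} : π_{bR}(a) = 1 for all b ∈ B }. Then the quotient W_R = W/N_R is an untwisted wreath-like product of A and B over the left-multiplication action of B on the coset space B/R. -/
open Pointwise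

open scoped DirectSum

section Aux

variable {A : Type*} [AddCommGroup A] {B : Type*} [Group B] [DecidableEq B] (R : Subgroup B)
variable [DecidableEq (B ⧸ R)]

noncomputable def auxPhi : (⨁ _ : B, A) →+ ⨁ _ : B ⧸ R, A :=
  DirectSum.toAddMonoid fun b => DirectSum.of (fun _ : B ⧸ R => A) (QuotientGroup.mk b)

lemma auxPhi_of (b : B) (a : A) :
    auxPhi (A := A) R (DirectSum.of (fun _ : B => A) b a)
      = DirectSum.of (fun _ : B ⧸ R => A) (QuotientGroup.mk b) a :=
  DirectSum.toAddMonoid_of _ _ _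

lemma aux_coset_eq (b : B) :
    b • (R : Set B) = {x : B | (QuotientGroup.mk x : B ⧸ R) = QuotientGroup.mk b} := by
  ext x
  simp only [Set.mem_setOf_eq, mem_leftCoset_iff, SetLike.mem_coe]
  rw [eq_comm, QuotientGroup.eq]

lemma auxPhi_apply (f : ⨁ _ : B, A) (b : B) :
    auxPhi (A := A) R f (QuotientGroup.mk b) = ∑ᶠ x ∈ b • (R : Set B), f x := by
  classical
  have hsupp : (Function.support fun x => f x).Finite :=
    Set.Finite.subset (DFinsupp.support f).finite_toSet
      (fun x hx => by simpa [DFinsupp.mem_support_iff] using hx)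
  rw [aux_coset_eq, finsum_mem_eq_sum_filter _ _ hsupp]
  have hT : hsupp.toFinset = DFinsupp.support f := by
    ext x; simp [DFinsupp.mem_support_iff]
  rw [hT]
  conv_lhs => rw [← DirectSum.sum_support_of f]
  rw [map_sum, DFinsupp.finset_sum_apply]
  rw [Finset.sum_filter]
  refine Finset.sum_congr rfl fun x hx => ?_
  rw [auxPhi_of]
  simp only [Set.mem_setOf_eq]
  by_cases hxb : (QuotientGroup.mk x : B ⧸ R) = QuotientGroup.mk b
  · rw [if_pos hxb, hxb, DirectSum.of_eq_same]
  · rw [if_neg hxb, DirectSum.of_eq_of_ne _ _ _ (Ne.symm hxb)]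


lemma auxPhi_eq_zero_iff (f : ⨁ _ : B, A) :
    auxPhi (A := A) R f = 0 ↔ ∀ b : B, (∑ᶠ x ∈ b • (R : Set B), f x) = 0 := by
  constructor
  · intro h b
    rw [← auxPhi_apply, h, DirectSum.zero_apply]
  · intro h
    refine DFunLike.ext _ _ fun i => ?_
    induction i using QuotientGroup.induction_on with
    | H b => rw [auxPhi_apply, h b, DirectSum.zero_apply]

end Aux


/-- let `W` be a regular wreath-like product of a nontrivial abelian group
`A` and a group `B`, let `R ≤ B`, and let
`N_R = { a ∈ A^{(B)} : π_{bR}(a) = 1 for all b ∈ B }` (a normal subgroup of `W`).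
Then `W_R = W/N_R` is an untwisted wreath-like product of `A` and `B` over the left
multiplication action of `B` on the coset space `B/R`: it is a wreath-like product,
and for each coset `i ∈ B/R` the preimage of `Stab_B(i)` in `W_R` centralizes the
summand `A'_i` of the base. -/
theorem quotient_by_NR_untwisted_wreathLike
    {A : Type*} [AddCommGroup A] [Nontrivial A] {B : Type*} [Group B]
    {W : Type*} [Group W] (ε : W →* B)
    (ι : Multiplicative (DirectSum B fun _ : B => A) →* W)
    (h : IsRegularWreathLikeAb A B W ε ι) (R : Subgroup B)
    (NR : Subgroup W) [NR.Normal]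
    (hNR : (NR : Set W) = ι '' (Multiplicative.ofAdd ''
      {f : DirectSum B fun _ : B => A | ∀ b : B, (∑ᶠ x ∈ b • (R : Set B), f x) = 0})) :
    ∃ ε' : (W ⧸ NR) →* B,
      (∀ w : W, ε' (QuotientGroup.mk w) = ε w) ∧
      ∃ A' : (B ⧸ R) → Subgroup (W ⧸ NR),
        IsWreathLike (B ⧸ R) (Multiplicative A) ε' A' ∧
        ∀ (i : B ⧸ R) (u : W ⧸ NR), ε' u ∈ MulAction.stabilizer B i →
          ∀ x ∈ A' i, Commute u x := by
  classical
  obtain ⟨hsurj, hinj, hrange, hconj⟩ := h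
  -- membership in NR
  have memNR : ∀ f : DirectSum B fun _ : B => A,
      ι (Multiplicative.ofAdd f) ∈ NR ↔ auxPhi R f = 0 := by
    intro f
    rw [auxPhi_eq_zero_iff]
    constructor
    · intro hf
      have hf' : ι (Multiplicative.ofAdd f) ∈ (NR : Set W) := hf
      rw [hNR] at hf'
      obtain ⟨m, ⟨g, hg, rfl⟩, hm⟩ := hf'
      have hgf : g = f := Multiplicative.ofAdd.injective (hinj hm)
      rwa [← hgf]
    · intro hf
      show ι (Multiplicative.ofAdd f) ∈ (NR : Set W)
      rw [hNR]
      exact ⟨Multiplicative.ofAdd f, ⟨f, hf, rfl⟩, rfl⟩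
  have keyiff : ∀ f g : DirectSum B fun _ : B => A,
      (QuotientGroup.mk (ι (Multiplicative.ofAdd f)) : W ⧸ NR)
        = QuotientGroup.mk (ι (Multiplicative.ofAdd g)) ↔ auxPhi R f = auxPhi R g := by
    intro f g
    rw [QuotientGroup.eq]
    have hmul : (ι (Multiplicative.ofAdd f))⁻¹ * ι (Multiplicative.ofAdd g)
        = ι (Multiplicative.ofAdd (-f + g)) := by
      rw [ofAdd_add, map_mul, ofAdd_neg, map_inv]
    rw [hmul, memNR, map_add, map_neg, neg_add_eq_zero, eq_comm]
  have hNRker : ∀ w ∈ NR, ε w = 1 := by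
    intro w hw
    have hw' : w ∈ (NR : Set W) := hw
    rw [hNR] at hw'
    obtain ⟨m, _, rfl⟩ := hw'
    have : ι m ∈ ι.range := ⟨m, rfl⟩
    rw [hrange] at this
    exact this
  refine ⟨QuotientGroup.lift NR ε hNRker, fun w => rfl, ?_⟩
  set ε' : (W ⧸ NR) →* B := QuotientGroup.lift NR ε hNRker with hε'
  have hε'mk : ∀ w : W, ε' (QuotientGroup.mk w) = ε w := fun _ => rfl
  -- the summand homomorphisms
  let E : B ⧸ R → Multiplicative A →* W ⧸ NR := fun i =>
    MonoidHom.mk' (fun a => QuotientGroup.mk (ι (Multiplicative.ofAdd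
      (DirectSum.of (fun _ : B => A) i.out a.toAdd))))
      (by
        intro a b
        rw [← QuotientGroup.mk_mul, ← map_mul, ← ofAdd_add, ← map_add]
        rfl)
  have Eapp : ∀ (i : B ⧸ R) (a : Multiplicative A),
      E i a = QuotientGroup.mk (ι (Multiplicative.ofAdd
        (DirectSum.of (fun _ : B => A) i.out a.toAdd))) := fun _ _ => rfl
  have phiOut : ∀ (i : B ⧸ R) (a : A),
      auxPhi R (DirectSum.of (fun _ : B => A) i.out a)
        = DirectSum.of (fun _ : B ⧸ R => A) i a := by
    intro i a
    rw [auxPhi_of, QuotientGroup.out_eq']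
  have Emk : ∀ (b : B) (a : A),
      (QuotientGroup.mk (ι (Multiplicative.ofAdd (DirectSum.of (fun _ : B => A) b a)))
          : W ⧸ NR) = E (QuotientGroup.mk b) (Multiplicative.ofAdd a) := by
    intro b a
    rw [Eapp, keyiff, phiOut, auxPhi_of]
    rfl
  let A' : B ⧸ R → Subgroup (W ⧸ NR) := fun i => (E i).range
  have Einj : ∀ i : B ⧸ R, Function.Injective (E i) := by
    intro i a b hab
    rw [Eapp, Eapp, keyiff, phiOut, phiOut] at hab
    have := DFunLike.congr_fun hab i
    rw [DirectSum.of_eq_same, DirectSum.of_eq_same] at this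
    exact Multiplicative.toAdd.injective this
  have smulmk : ∀ (c : B) (i : B ⧸ R), c • i = (QuotientGroup.mk (c * i.out) : B ⧸ R) := by
    intro c i
    conv_lhs => rw [← QuotientGroup.out_eq' i]
    rfl
  have hconjE : ∀ (w : W) (i : B ⧸ R) (a : Multiplicative A),
      (QuotientGroup.mk w : W ⧸ NR) * E i a * (QuotientGroup.mk w)⁻¹ = E (ε w • i) a := by
    intro w i a
    obtain ⟨f', hf1, hf2⟩ := hconj w (DirectSum.of (fun _ : B => A) i.out a.toAdd)
    have hf'eq : f' = DirectSum.of (fun _ : B => A) (ε w * i.out) a.toAdd := by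
      refine DFunLike.ext _ _ fun c => ?_
      have h2 := hf2 ((ε w)⁻¹ * c)
      rw [mul_inv_cancel_left] at h2
      rw [h2]
      by_cases hc : c = ε w * i.out
      · have hgc : (ε w)⁻¹ * c = i.out := by rw [hc, inv_mul_cancel_left]
        rw [hgc, hc, DirectSum.of_eq_same, DirectSum.of_eq_same]
      · have h1 : i.out ≠ (ε w)⁻¹ * c := by
          intro hx
          exact hc (by rw [hx, mul_inv_cancel_left])
        rw [DirectSum.of_eq_of_ne _ _ _ (Ne.symm h1), DirectSum.of_eq_of_ne _ _ _ (fun hx => hc hx)]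
    calc (QuotientGroup.mk w : W ⧸ NR) * E i a * (QuotientGroup.mk w)⁻¹
        = QuotientGroup.mk (w * ι (Multiplicative.ofAdd
            (DirectSum.of (fun _ : B => A) i.out a.toAdd)) * w⁻¹) := by
          rw [Eapp, QuotientGroup.mk_mul, QuotientGroup.mk_mul, QuotientGroup.mk_inv]
      _ = QuotientGroup.mk (ι (Multiplicative.ofAdd f')) := by rw [hf1]
      _ = E (ε w • i) a := by rw [hf'eq, Emk, ← smulmk]; rfl
  have hmkcomm : ∀ m m' : Multiplicative (DirectSum B fun _ : B => A),
      Commute (QuotientGroup.mk (ι m) : W ⧸ NR) (QuotientGroup.mk (ι m')) := by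
    intro m m'
    have hι : ι m * ι m' = ι m' * ι m := by
      rw [← _root_.map_mul, ← _root_.map_mul, mul_comm]
    show _ * _ = _ * _
    rw [← QuotientGroup.mk_mul, ← QuotientGroup.mk_mul, hι]
  have hcomm : ∀ i j : B ⧸ R, i ≠ j → ∀ x ∈ A' i, ∀ y ∈ A' j, Commute x y := by
    rintro i j - x ⟨a, rfl⟩ y ⟨b, rfl⟩
    rw [Eapp, Eapp]
    exact hmkcomm _ _
  -- supremum is the kernel
  have hsup : (⨆ i, A' i) = ε'.ker := by
    apply le_antisymm
    · refine iSup_le fun i => ?_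
      rintro x ⟨a, rfl⟩
      have hk : ι (Multiplicative.ofAdd (DirectSum.of (fun _ : B => A) i.out a.toAdd))
          ∈ ε.ker := by
        rw [← hrange]; exact ⟨_, rfl⟩
      show ε' (E i a) = 1
      rw [Eapp, hε'mk]
      exact hk
    · intro u hu
      revert hu
      refine QuotientGroup.induction_on u fun w => ?_
      intro hw
      have hwk : w ∈ ι.range := by
        rw [hrange]
        exact hw
      obtain ⟨m, rfl⟩ := hwk
      have gen : ∀ f : DirectSum B fun _ : B => A,
          (QuotientGroup.mk (ι (Multiplicative.ofAdd f)) : W ⧸ NR) ∈ ⨆ i, A' i := by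
        intro f
        induction f using DirectSum.induction_on with
        | zero =>
          rw [ofAdd_zero, _root_.map_one, QuotientGroup.mk_one]
          exact one_mem _
        | of b a =>
          rw [Emk]
          exact Subgroup.mem_iSup_of_mem (QuotientGroup.mk b) ⟨_, rfl⟩
        | add f g hf hg =>
          rw [ofAdd_add, _root_.map_mul, QuotientGroup.mk_mul]
          exact mul_mem hf hg
      simpa using gen m.toAdd
  -- independence
  let χ : B ⧸ R → (Multiplicative (DirectSum B fun _ : B => A) →* Multiplicative A) :=
    fun i => MonoidHom.mk' (fun f => Multiplicative.ofAdd (auxPhi R f.toAdd i))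
      (by
        intro f g
        show Multiplicative.ofAdd (auxPhi R (f.toAdd + g.toAdd) i) = _
        rw [_root_.map_add, DirectSum.add_apply, ofAdd_add])
  have hind : iSupIndep A' := by
    intro i
    rw [Subgroup.disjoint_def]
    intro x hxi hxs
    have hxC : x ∈ Subgroup.map ((QuotientGroup.mk' NR).comp ι) (χ i).ker := by
      have hle : (⨆ j, ⨆ _ : j ≠ i, A' j)
          ≤ Subgroup.map ((QuotientGroup.mk' NR).comp ι) (χ i).ker := by
        refine iSup_le fun j => iSup_le fun hj => ?_
        rintro y ⟨a, rfl⟩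
        refine ⟨Multiplicative.ofAdd (DirectSum.of (fun _ : B => A) j.out a.toAdd), ?_, rfl⟩
        show Multiplicative.ofAdd
            (auxPhi R (DirectSum.of (fun _ : B => A) j.out a.toAdd) i) = 1
        rw [phiOut, DirectSum.of_eq_of_ne _ _ _ (Ne.symm hj), ofAdd_zero]
      exact hle hxs
    obtain ⟨a, rfl⟩ := hxi
    obtain ⟨g, hg, hgx⟩ := hxC
    have hphi : auxPhi R g.toAdd = auxPhi R (DirectSum.of (fun _ : B => A) i.out a.toAdd) := by
      rw [← keyiff]
      have : (QuotientGroup.mk (ι g) : W ⧸ NR) = E i a := hgx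
      rw [Eapp] at this
      simpa using this
    have hgi : auxPhi R g.toAdd i = 0 := by
      have : Multiplicative.ofAdd (auxPhi R g.toAdd i) = 1 := hg
      exact ofAdd_eq_one.mp this
    have ha : a.toAdd = 0 := by
      have := DFunLike.congr_fun hphi i
      rw [hgi, phiOut, DirectSum.of_eq_same] at this
      exact this.symm
    have : a = 1 := Multiplicative.toAdd.injective ha
    rw [this, _root_.map_one]
  -- conjugation equivariance
  have hconj' : ∀ (w' : W ⧸ NR) (i : B ⧸ R),
      (A' i).map (MulAut.conj w').toMonoidHom = A' (ε' w' • i) := by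
    intro w' i
    refine QuotientGroup.induction_on w' fun w => ?_
    apply le_antisymm
    · rintro _ ⟨x, ⟨a, rfl⟩, rfl⟩
      refine ⟨a, ?_⟩
      rw [hε'mk]
      exact (hconjE w i a).symm
    · rintro _ ⟨a, rfl⟩
      refine ⟨E i a, ⟨a, rfl⟩, ?_⟩
      show (QuotientGroup.mk w : W ⧸ NR) * E i a * (QuotientGroup.mk w : W ⧸ NR)⁻¹ = _
      rw [hconjE w i a, hε'mk]
  refine ⟨A', ⟨?_, ?_, hsup, hind, hcomm, hconj'⟩, ?_⟩
  · intro b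
    obtain ⟨w, rfl⟩ := hsurj b
    exact ⟨QuotientGroup.mk w, rfl⟩
  · exact fun i => ⟨(MonoidHom.ofInjective (Einj i)).symm⟩
  · intro i u hu x hx
    revert hu hx
    refine QuotientGroup.induction_on u fun w => ?_
    intro hu hx
    obtain ⟨a, rfl⟩ := hx
    have hst : ε w • i = i := by
      have := hu
      rw [MulAction.mem_stabilizer_iff, hε'mk] at this
      exact this
    have hc := hconjE w i a
    rw [hst] at hc
    exact mul_inv_eq_iff_eq_mul.mp hc
end

section
/- Let G be a group and H a Cohen-Lyndon subgroup of G, i.e., there is a left transversal T of H⟪H⟫ in G (where ⟪H⟫ is the normal closure of H in G) such that ⟪H⟫ is the free product of the conjugates tHt⁻¹ for t ∈ T. Then H is malnormal in G: H ∩ gHg⁻¹ = {1} for every g ∈ G \ H. -/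
/-- The family of subgroups `H i` forms an internal free product decomposition of the
subgroup `K`: the canonical homomorphism from the abstract free product
`∗_i H i` to `G` is injective, and the `H i` generate `K`. -/
def IsInternalFreeProductOf {G : Type*} [Group G] {ι : Type*} (H : ι → Subgroup G)
    (K : Subgroup G) : Prop :=
  Function.Injective (Monoid.CoprodI.lift fun i => (H i).subtype) ∧ (⨆ i, H i) = K

/-- The conjugate `g H g⁻¹` of a subgroup. -/
def conjSub {G : Type*} [Group G] (g : G) (H : Subgroup G) : Subgroup G :=
  H.map (MulAut.conj g).toMonoidHom

/-- `T` is a left transversal of the subgroup `K` in `G`: it contains exactly one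
representative of every left coset `gK`. -/
def IsLeftTransversal {G : Type*} [Group G] (T : Set G) (K : Subgroup G) : Prop :=
  ∀ g : G, ∃! t, t ∈ T ∧ t⁻¹ * g ∈ K

/-- `(G, H, N)` is a Cohen-Lyndon triple: `N ⊴ H ≤ G`, and there is a left transversal
`T` of `H⟪N⟫ = H ⊔ ⟪N⟫` in `G` such that `⟪N⟫ = ∗_{t∈T} t N t⁻¹` (internal free
product), where `⟪N⟫` denotes the normal closure of `N` in `G`. -/
def IsCohenLyndonTriple (G : Type*) [Group G] (H N : Subgroup G) : Prop :=
  N ≤ H ∧ (∀ h ∈ H, ∀ n ∈ N, h * n * h⁻¹ ∈ N) ∧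
  ∃ T : Set G, IsLeftTransversal T (H ⊔ Subgroup.normalClosure (N : Set G)) ∧
    IsInternalFreeProductOf (fun t : T => conjSub (t : G) N)
      (Subgroup.normalClosure (N : Set G))

/-- `H` is a Cohen-Lyndon subgroup of `G` if `(G, H, H)` is a Cohen-Lyndon triple. -/
def IsCohenLyndonSubgroup (G : Type*) [Group G] (H : Subgroup G) : Prop :=
  IsCohenLyndonTriple G H H

namespace Monoid.CoprodI

variable {ι : Type*} {G : ι → Type*} [∀ i, Group (G i)]

theorem word_prod_inj [DecidableEq ι] [∀ i, DecidableEq (G i)]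
    {w₁ w₂ : Word G} (h : w₁.prod = w₂.prod) : w₁ = w₂ :=
  Word.equiv.symm.injective h

theorem prod_equiv_self [DecidableEq ι] [∀ i, DecidableEq (G i)] (w : CoprodI G) :
    (Word.equiv w).prod = w :=
  Word.equiv.symm_apply_apply w

theorem empty_fstIdx_ne (i : ι) : (Word.empty : Word G).fstIdx ≠ some i := by
  simp [Word.fstIdx, Word.empty]

theorem index_eq_of_of_eq_of [DecidableEq ι] [∀ i, DecidableEq (G i)]
    {i j : ι} {a : G i} {b : G j} (ha : a ≠ 1) (h : of a = of b) : i = j := by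
  have hb : b ≠ 1 := by
    rintro rfl
    rw [map_one] at h
    exact ha (of_injective i (by rw [h, map_one]))
  have h1 : (Word.cons a Word.empty (empty_fstIdx_ne i) ha).prod
      = (Word.cons b Word.empty (empty_fstIdx_ne j) hb).prod := by
    rw [Word.prod_cons, Word.prod_cons, Word.prod_empty, mul_one, mul_one]; exact h
  have h2 := congrArg Word.toList (word_prod_inj h1)
  simp only [Word.cons] at h2
  injection h2 with h3
  exact congrArg Sigma.fst h3

theorem conj_word_shape [DecidableEq ι] [∀ i, DecidableEq (G i)] (u : Word G) :
    ∀ (j : ι) (b : G j), b ≠ 1 →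
      (∃ c : G j, c ≠ 1 ∧ u.prod * of b * u.prod⁻¹ = of c ∧
          ∃ d : G j, of d = u.prod)
      ∨ (∃ (f : ι) (v : NeWord G f f), u.fstIdx = some f ∧ 1 < v.toList.length ∧
          u.prod * of b * u.prod⁻¹ = v.prod) := by
  induction u using Word.consRecOn with
  | empty =>
    intro j b hb
    left
    exact ⟨b, hb, by simp, 1, by simp⟩
  | cons k m u' h1 h2 ih =>
    intro j b hb
    have hprod : (Word.cons m u' h1 h2).prod = of m * u'.prod := Word.prod_cons _ _ _ _ _
    rcases ih j b hb with ⟨c, hc, hzc, d, hd⟩ | ⟨f, v, hfst, hlen, hzv⟩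
    · by_cases hkj : k = j
      · subst hkj
        left
        refine ⟨m * c * m⁻¹, ?_, ?_, m * d, ?_⟩
        · intro hone
          apply hc
          have := congrArg (fun z => m⁻¹ * z * m) hone
          simpa [mul_assoc] using this
        · rw [hprod]
          have : of m * u'.prod * of b * (of m * u'.prod)⁻¹
              = of m * (u'.prod * of b * u'.prod⁻¹) * (of m)⁻¹ := by group
          rw [this, hzc]
          simp [map_mul, mul_assoc]
        · rw [hprod, map_mul, hd]
      · right
        refine ⟨k, NeWord.append (NeWord.singleton m h2) hkj
            (NeWord.append (NeWord.singleton c hc) (Ne.symm hkj)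
              (NeWord.singleton m⁻¹ (inv_ne_one.2 h2))), ?_, ?_, ?_⟩
        · simp
        · simp
        · rw [hprod]
          have : of m * u'.prod * of b * (of m * u'.prod)⁻¹
              = of m * (u'.prod * of b * u'.prod⁻¹) * (of m)⁻¹ := by group
          rw [this, hzc]
          simp [map_mul, mul_assoc]
    · have hkf : k ≠ f := by
        intro heq
        exact h1 (by rw [hfst, heq])
      right
      refine ⟨k, NeWord.append (NeWord.singleton m h2) hkf
          (NeWord.append v (Ne.symm hkf) (NeWord.singleton m⁻¹ (inv_ne_one.2 h2))), ?_, ?_, ?_⟩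
      · simp
      · simp only [NeWord.toList, List.length_append, List.length_singleton]
        omega
      · rw [hprod]
        have : of m * u'.prod * of b * (of m * u'.prod)⁻¹
            = of m * (u'.prod * of b * u'.prod⁻¹) * (of m)⁻¹ := by group
        rw [this, hzv]
        simp [mul_assoc]

/-- Key lemma: if a conjugate of a nontrivial letter is a letter, then the indices
agree and the conjugator lies in the corresponding factor. -/
theorem conj_of_eq_of {w : CoprodI G} {i j : ι} {a : G i} {b : G j}
    (ha : a ≠ 1) (h : w * of a * w⁻¹ = of b) :
    i = j ∧ ∃ c : G i, of c = w := by
  classical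
  have hb : b ≠ 1 := by
    rintro rfl
    rw [map_one] at h
    apply ha
    have : of a = 1 := by
      have := congrArg (fun z => w⁻¹ * z * w) h
      simpa [mul_assoc] using this
    exact of_injective i (by rw [this, map_one])
  rcases conj_word_shape (Word.equiv w) i a ha with ⟨c, hc, heq, d, hd⟩ | ⟨f, v, _, hlen, heq⟩
  · rw [prod_equiv_self] at heq hd
    rw [h] at heq
    exact ⟨index_eq_of_of_eq_of hc heq.symm, d, hd⟩
  · exfalso
    rw [prod_equiv_self, h] at heq
    have hsingle : (Word.cons b Word.empty (empty_fstIdx_ne j) hb).prod = v.toWord.prod := by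
      rw [Word.prod_cons, Word.prod_empty, mul_one]
      exact heq
    have := congrArg Word.toList (word_prod_inj hsingle)
    have hlist : [(⟨j, b⟩ : Σ i, G i)] = v.toList := by simpa [Word.cons, NeWord.toWord] using this
    rw [← hlist] at hlen
    simp at hlen

end Monoid.CoprodI

open Monoid

theorem mem_conjSub {G : Type*} [Group G] {g x : G} {H : Subgroup G} :
    x ∈ conjSub g H ↔ ∃ h ∈ H, g * h * g⁻¹ = x := by
  simp [conjSub, Subgroup.mem_map, MulAut.conj_apply]

/-- a Cohen-Lyndon subgroup `H` of `G` is malnormal: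
`H ∩ gHg⁻¹ = {1}` for every `g ∈ G \ H`. -/
theorem cohenLyndon_malnormal {G : Type*} [Group G] (H : Subgroup G)
    (h : IsCohenLyndonSubgroup G H) :
    ∀ g : G, g ∉ H → H ⊓ conjSub g H = ⊥ := by
  classical
  intro g hg
  obtain ⟨-, -, T, hT, hinj, hsup⟩ := h
  set N := Subgroup.normalClosure (H : Set G) with hNdef
  have hHN : H ≤ N := fun _ hx => Subgroup.subset_normalClosure hx
  have hsupN : H ⊔ N = N := sup_eq_right.mpr hHN
  rw [Subgroup.eq_bot_iff_forall]
  intro x hx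
  by_contra hx1
  rw [Subgroup.mem_inf] at hx
  obtain ⟨hxH, hxC⟩ := hx
  obtain ⟨y, hyH, hyx⟩ := mem_conjSub.mp hxC
  have hy1 : y ≠ 1 := by rintro rfl; apply hx1; rw [← hyx]; simp
  -- transversal representatives
  obtain ⟨t₀, ⟨ht₀T, ht₀mem⟩, -⟩ := hT 1
  obtain ⟨t, ⟨htT, htmem⟩, -⟩ := hT g
  rw [hsupN] at ht₀mem htmem
  rw [mul_one] at ht₀mem
  have ht₀N : t₀ ∈ N := (Subgroup.inv_mem_iff N).mp ht₀mem
  -- the free product map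
  set φ := CoprodI.lift (fun t : T => (conjSub (t : G) H).subtype) with hφ
  have hrange : φ.range = N := by
    rw [hφ, CoprodI.range_eq_iSup]
    simpa only [Subgroup.range_subtype] using hsup
  -- elements
  have haMem : t₀ * x * t₀⁻¹ ∈ conjSub t₀ H := mem_conjSub.mpr ⟨x, hxH, rfl⟩
  have hbMem : t * y * t⁻¹ ∈ conjSub t H := mem_conjSub.mpr ⟨y, hyH, rfl⟩
  set tt0 : T := ⟨t₀, ht₀T⟩ with htt0
  set tt : T := ⟨t, htT⟩ with htt
  set a : ↥(conjSub (tt0 : G) H) := ⟨t₀ * x * t₀⁻¹, haMem⟩ with haa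
  set b : ↥(conjSub (tt : G) H) := ⟨t * y * t⁻¹, hbMem⟩ with hbb
  have hφa : φ ((CoprodI.of (M := fun t : T => ↥(conjSub (t : G) H)) a)) = t₀ * x * t₀⁻¹ := by
    rw [hφ, CoprodI.lift_of]; rfl
  have hφb : φ ((CoprodI.of (M := fun t : T => ↥(conjSub (t : G) H)) b)) = t * y * t⁻¹ := by
    rw [hφ, CoprodI.lift_of]; rfl
  have hb1 : b ≠ 1 := by
    intro hb
    apply hy1
    have : t * y * t⁻¹ = 1 := congrArg Subtype.val hb
    have := congrArg (fun z => t⁻¹ * z * t) this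
    simpa [mul_assoc] using this
  -- the conjugator
  have hkN : t⁻¹ * g ∈ N := htmem
  have hconjN : t * (t⁻¹ * g) * t⁻¹ ∈ N :=
    (Subgroup.normalClosure_normal).conj_mem _ hkN t
  set u : G := t₀ * (t * (t⁻¹ * g) * t⁻¹) with hu
  have huN : u ∈ N := mul_mem ht₀N hconjN
  obtain ⟨U, hU⟩ : u ∈ φ.range := hrange ▸ huN
  have key : u * (t * y * t⁻¹) * u⁻¹ = t₀ * x * t₀⁻¹ := by
    rw [← hyx, hu]; group
  have hφeq : φ (U * (CoprodI.of (M := fun t : T => ↥(conjSub (t : G) H)) b) * U⁻¹) = φ ((CoprodI.of (M := fun t : T => ↥(conjSub (t : G) H)) a)) := by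
    rw [map_mul, map_mul, map_inv, hU, hφa, hφb, key]
  have hUBA : U * (CoprodI.of (M := fun t : T => ↥(conjSub (t : G) H)) b) * U⁻¹ = (CoprodI.of (M := fun t : T => ↥(conjSub (t : G) H)) a) := hinj hφeq
  obtain ⟨hidx, c, hc⟩ := Monoid.CoprodI.conj_of_eq_of (G := fun t : T => ↥(conjSub (t : G) H)) hb1 hUBA
  have htt0eq : t = t₀ := congrArg Subtype.val hidx
  -- u = φ U = c.val ∈ conjSub t H
  have hcu : (c : G) = u := by
    rw [← hU, ← hc, hφ, CoprodI.lift_of]; rfl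
  have huC : u ∈ conjSub (tt : G) H := hcu ▸ c.2
  obtain ⟨hh, hhH, hhu⟩ := mem_conjSub.mp huC
  apply hg
  have : g = hh := by
    have h2 : t * hh * t⁻¹ = u := hhu
    rw [hu, ← htt0eq] at h2
    have h3 : (t : G) * hh * t⁻¹ = t * g * t⁻¹ := by rw [h2]; group
    exact (mul_left_cancel (mul_right_cancel h3)).symm
  rw [this]; exact hhH
end

section
/- Let H ≤ K ≤ G be groups such that (G, K, ⟪H⟫^K) is a Cohen-Lyndon triple and H is a Cohen-Lyndon subgroup of K. Then H is a Cohen-Lyndon subgroup of G. Moreover, if T is a left transversal of K⟪H⟫^G in G witnessing the first condition and S is a left transversal of ⟪H⟫^K in K witnessing the second, then TS = {ts : t∈T, s∈S} is a left transversal of ⟪H⟫^G in G and ⟪H⟫^G = ∗_{t∈T, s∈S} (ts)H(ts)⁻¹. -/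
/-- The normal closure `⟪H⟫^K` of `H` in a subgroup `K` (with `H ≤ K`), viewed as a
subgroup of the ambient group `G`. -/
def nclIn {G : Type*} [Group G] (K H : Subgroup G) : Subgroup G :=
  Subgroup.closure {x : G | ∃ k ∈ K, ∃ a ∈ H, x = k * a * k⁻¹}

/-! ### Auxiliary machinery -/

open Monoid.CoprodI

namespace CLAux

/-! #### Reduced-word tooling for free products -/

theorem word_prod_injective {ι : Type*} {M : ι → Type*} [∀ i, Monoid (M i)] :
    Function.Injective (Word.prod (M := M)) := by
  classical
  exact ((Word.equiv (M := M)).symm.injective : Function.Injective (Word.prod (M := M)))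

theorem word_prod_ne_one {ι : Type*} {M : ι → Type*} [∀ i, Monoid (M i)] {w : Word M}
    (h : w ≠ Word.empty) : w.prod ≠ 1 := by
  intro hw
  exact h (word_prod_injective (by rw [hw, Word.prod_empty]))

theorem cons_ne_empty {ι : Type*} {M : ι → Type*} [∀ i, Monoid (M i)] {i : ι} (m : M i)
    (w : Word M) (hmw : w.fstIdx ≠ some i) (h1 : m ≠ 1) :
    Word.cons m w hmw h1 ≠ Word.empty := by
  intro h
  have := congrArg Word.toList h
  simp [Word.cons, Word.empty] at this

/-- a single letter as a word -/
def singleWord {ι : Type*} {M : ι → Type*} [∀ i, Monoid (M i)] {k : ι} (g : M k)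
    (hg : g ≠ 1) : Word M where
  toList := [⟨k, g⟩]
  ne_one := by simpa using hg
  chain_ne := List.isChain_singleton _

theorem prod_singleWord {ι : Type*} {M : ι → Type*} [∀ i, Monoid (M i)] {k : ι} (g : M k)
    (hg : g ≠ 1) : (singleWord g hg).prod = of g := by
  simp [singleWord, Word.prod]

theorem neword_prod_ne_of {ι : Type*} {M : ι → Type*} [∀ i, Monoid (M i)] {i j : ι}
    (u : NeWord M i j) (hlen : 2 ≤ u.toList.length) {k : ι} (g : M k) : u.prod ≠ of g := by
  intro hu
  have htl : u.toWord.toList = u.toList := rfl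
  by_cases hg : g = 1
  · subst hg
    rw [map_one] at hu
    have h0 : u.toWord = Word.empty := word_prod_injective (by rw [Word.prod_empty]; exact hu)
    have : u.toList.length = 0 := by rw [← htl, h0]; rfl
    omega
  · have h2 : (singleWord g hg).prod = of g := prod_singleWord g hg
    have heq : u.toWord = singleWord g hg := word_prod_injective (by rw [h2]; exact hu)
    have : u.toList.length = 1 := by rw [← htl, heq]; rfl
    omega

theorem two_le_append_length {ι : Type*} {M : ι → Type*} [∀ i, Monoid (M i)] {i j k l : ι}
    (w₁ : NeWord M i j) (hne : j ≠ k) (w₂ : NeWord M k l) :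
    2 ≤ (w₁.append hne w₂).toList.length := by
  have h1 := w₁.toList_ne_nil
  have h2 := w₂.toList_ne_nil
  have : (w₁.append hne w₂).toList = w₁.toList ++ w₂.toList := rfl
  rw [this, List.length_append]
  have l1 : 1 ≤ w₁.toList.length := List.length_pos_iff.mpr h1
  have l2 : 1 ≤ w₂.toList.length := List.length_pos_iff.mpr h2
  omega

/-- Conjugating a nontrivial letter `g : G j` by a reduced word ending at index `j`:
either the word is a single letter of `G j` (and the conjugate is again a letter of `G j`),
or the conjugate is represented by a reduced word of length at least 2. -/
theorem conj_letter_structure {ι : Type*} {G : ι → Type*} [∀ i, Group (G i)] :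
    ∀ {i j : ι} (w : NeWord G i j) {g : G j}, g ≠ 1 →
    (i = j ∧ (∃ g₀ : G j, w.prod = of g₀) ∧
      ∃ g' : G j, g' ≠ 1 ∧ w.prod * of g * w.prod⁻¹ = of g') ∨
    (∃ u : NeWord G i i, 2 ≤ u.toList.length ∧ w.prod * of g * w.prod⁻¹ = u.prod) := by
  intro i j w
  induction w with
  | singleton b hb =>
    intro g hg
    left
    refine ⟨rfl, ⟨b, (NeWord.prod_singleton b hb)⟩, b * g * b⁻¹, by simp [hg], ?_⟩
    rw [NeWord.prod_singleton]
    simp [← map_mul, ← map_inv]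
  | @append i₁ j₁ k₂ l w₁ hne w₂ ih₁ ih₂ =>
    intro g hg
    rcases ih₂ hg with ⟨rfl, ⟨g₀, hg₀⟩, g', hg', hconj⟩ | ⟨u₂, hlen, hconj⟩
    · right
      refine ⟨(w₁.append hne (NeWord.singleton g' hg')).append hne.symm w₁.inv, ?_, ?_⟩
      · have h1 := w₁.toList_ne_nil
        have h2 := w₁.inv.toList_ne_nil
        have : ((w₁.append hne (NeWord.singleton g' hg')).append hne.symm w₁.inv).toList
            = (w₁.toList ++ [⟨_, g'⟩]) ++ w₁.inv.toList := rfl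
        rw [this]
        simp only [List.length_append, List.length_singleton]
        have l1 : 1 ≤ w₁.toList.length := List.length_pos_iff.mpr h1
        have l2 : 1 ≤ w₁.inv.toList.length := List.length_pos_iff.mpr h2
        omega
      · simp only [NeWord.append_prod, NeWord.prod_singleton, NeWord.inv_prod, mul_inv_rev]
        calc w₁.prod * w₂.prod * of g * (w₂.prod⁻¹ * w₁.prod⁻¹)
            = w₁.prod * (w₂.prod * of g * w₂.prod⁻¹) * w₁.prod⁻¹ := by group
          _ = w₁.prod * of g' * w₁.prod⁻¹ := by rw [hconj]
    · right
      refine ⟨(w₁.append hne u₂).append hne.symm w₁.inv, ?_, ?_⟩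
      · have h2 := w₁.inv.toList_ne_nil
        have : ((w₁.append hne u₂).append hne.symm w₁.inv).toList
            = (w₁.toList ++ u₂.toList) ++ w₁.inv.toList := rfl
        rw [this]
        simp only [List.length_append]
        omega
      · simp only [NeWord.append_prod, NeWord.inv_prod, mul_inv_rev]
        calc w₁.prod * w₂.prod * of g * (w₂.prod⁻¹ * w₁.prod⁻¹)
            = w₁.prod * (w₂.prod * of g * w₂.prod⁻¹) * w₁.prod⁻¹ := by group
          _ = w₁.prod * u₂.prod * w₁.prod⁻¹ := by rw [hconj]

/-- If a nontrivial factor `G i₀` is normalized (in both directions) by `x`, then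
`x` lies in that factor. -/
theorem of_range_of_conj {ι : Type*} {Gf : ι → Type*} [∀ i, Group (Gf i)] {i₀ : ι}
    {x : Monoid.CoprodI Gf}
    (hnt : ∃ g : Gf i₀, g ≠ 1)
    (hx : ∀ g : Gf i₀, ∃ g' : Gf i₀, x * of g * x⁻¹ = of g')
    (hx' : ∀ g : Gf i₀, ∃ g' : Gf i₀, x⁻¹ * of g * x = of g') :
    ∃ g₀ : Gf i₀, x = of g₀ := by
  classical
  set w := Word.equiv x with hw
  have hxw : Word.prod w = x := by
    have := (Word.equiv (M := Gf)).symm_apply_apply x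
    rw [hw]; exact this
  by_cases hemp : w = Word.empty
  · refine ⟨1, ?_⟩
    rw [map_one, ← hxw, hemp, Word.prod_empty]
  · obtain ⟨i, j, w', hw'⟩ := NeWord.of_word w hemp
    have hxprod : w'.prod = x := by
      show w'.toWord.prod = x
      rw [hw', hxw]
    obtain ⟨g, hg⟩ := hnt
    by_cases hj : j = i₀
    · subst hj
      obtain ⟨g', hcon⟩ := hx g
      rcases conj_letter_structure w' hg with ⟨_, ⟨g₀, h0⟩, _⟩ | ⟨u, hlen, hconj⟩
      · exact ⟨g₀, by rw [← hxprod, h0]⟩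
      · exfalso
        rw [hxprod] at hconj
        rw [hcon] at hconj
        exact neword_prod_ne_of u hlen g' hconj.symm
    · by_cases hi : i = i₀
      · subst hi
        obtain ⟨g', hcon⟩ := hx' g
        have hinvprod : w'.inv.prod = x⁻¹ := by rw [NeWord.inv_prod, hxprod]
        rcases conj_letter_structure w'.inv hg with ⟨_, ⟨g₀, h0⟩, _⟩ | ⟨u, hlen, hconj⟩
        · refine ⟨g₀⁻¹, ?_⟩
          rw [map_inv, ← h0, hinvprod, inv_inv]
        · exfalso
          rw [hinvprod, inv_inv, hcon] at hconj
          exact neword_prod_ne_of u hlen g' hconj.symm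
      · exfalso
        obtain ⟨g', hcon⟩ := hx g
        have hji : (i₀ : ι) ≠ j := fun h => hj h.symm
        set u := (w'.append hj (NeWord.singleton g hg)).append hji w'.inv with hu
        have hulen : 2 ≤ u.toList.length := two_le_append_length _ _ _
        have huprod : u.prod = x * of g * x⁻¹ := by
          rw [hu]
          simp only [NeWord.append_prod, NeWord.prod_singleton, NeWord.inv_prod]
          rw [hxprod]
        rw [hcon] at huprod
        exact neword_prod_ne_of u hulen g' huprod

/-! #### Free products of free products -/

section Blocks

variable {ι σ : Type*} {K : ι → Type*} [∀ i, Group (K i)]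
  {A : ι → σ → Type*} [∀ i s, Group (A i s)]
  (φ : ∀ i s, A i s →* K i)

/-- The canonical map from the free product over pairs to the free product of the
per-index free products, composed with the given injections. -/
noncomputable def blockMap : Monoid.CoprodI (fun p : ι × σ => A p.1 p.2) →* Monoid.CoprodI K :=
  Monoid.CoprodI.lift (fun p : ι × σ => (of (M := K)).comp (φ p.1 p.2))

theorem blockMap_injective (hφ : ∀ i, Function.Injective (Monoid.CoprodI.lift (fun s => φ i s))) :
    Function.Injective (blockMap φ) := by
  classical
  set Ψ := blockMap φ with hΨdef
  have key : ∀ w : Word (fun p : ι × σ => A p.1 p.2), w ≠ Word.empty →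
      ∃ (i : ι) (s₀ : σ) (v : Word (fun s => A i s)) (W' : Word K),
        v ≠ Word.empty ∧ v.fstIdx = some s₀ ∧ w.fstIdx = some (i, s₀) ∧
        W'.fstIdx ≠ some i ∧
        Ψ w.prod = of (Monoid.CoprodI.lift (fun s => φ i s) v.prod) * W'.prod := by
    intro w
    induction w using Word.consRecOn with
    | empty => intro h; exact absurd rfl h
    | cons p m w' h1 h2 ih =>
      intro _
      obtain ⟨pi, ps⟩ := p
      by_cases hw' : w' = Word.empty
      · subst hw'
        refine ⟨pi, ps, Word.cons m Word.empty (by rintro ⟨⟩) h2,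
          Word.empty, cons_ne_empty _ _ _ _, rfl, by simp, by simp [Word.fstIdx, Word.empty], ?_⟩
        simp only [Word.prod_cons, Word.prod_empty, mul_one]
        rw [hΨdef]
        simp [blockMap]
      · obtain ⟨i, s₀, v, W', hv1, hv2, hw'fst, hW'fst, hΨ⟩ := ih hw'
        by_cases hpi : pi = i
        · subst hpi
          have hps : ps ≠ s₀ := by
            intro h
            subst h
            exact h1 hw'fst
          refine ⟨pi, ps, Word.cons m v (by rw [hv2]; simp [Ne.symm hps]) h2, W',
            cons_ne_empty _ _ _ _, by simp, by simp, hW'fst, ?_⟩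
          rw [Word.prod_cons, map_mul, hΨ, Word.prod_cons, map_mul]
          have : Ψ (of m) = of (φ pi ps m) := by rw [hΨdef]; simp [blockMap]
          rw [this, lift_of, ← mul_assoc, ← MonoidHom.map_mul (of (M := K))]
        · have hk' : Monoid.CoprodI.lift (fun s => φ i s) v.prod ≠ 1 := by
            intro h
            exact word_prod_ne_one hv1 (hφ i (by rw [h, map_one]))
          refine ⟨pi, ps, Word.cons m Word.empty (by rintro ⟨⟩) h2,
            Word.cons (Monoid.CoprodI.lift (fun s => φ i s) v.prod) W' hW'fst hk',
            cons_ne_empty _ _ _ _, rfl, by simp, by simp [Ne.symm hpi], ?_⟩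
          rw [Word.prod_cons, map_mul, hΨ, Word.prod_cons]
          have : Ψ (of m) = of (φ pi ps m) := by rw [hΨdef]; simp [blockMap]
          rw [this]
          simp only [Word.prod_cons, Word.prod_empty, mul_one, mul_assoc, lift_of]
  rw [injective_iff_map_eq_one]
  intro x hx
  set w := Word.equiv x with hw
  have hxw : Word.prod w = x := by
    have := (Word.equiv (M := fun p : ι × σ => A p.1 p.2)).symm_apply_apply x
    rw [hw]; exact this
  by_cases hemp : w = Word.empty
  · rw [← hxw, hemp, Word.prod_empty]
  · exfalso
    obtain ⟨i, s₀, v, W', hv1, hv2, hwfst, hW'fst, hΨ⟩ := key w hemp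
    have hk : Monoid.CoprodI.lift (fun s => φ i s) v.prod ≠ 1 := by
      intro h
      exact word_prod_ne_one hv1 (hφ i (by rw [h, map_one]))
    rw [hxw, hx] at hΨ
    have : (Word.cons (Monoid.CoprodI.lift (fun s => φ i s) v.prod) W' hW'fst hk).prod
        = Word.empty.prod := by
      rw [Word.prod_cons, Word.prod_empty, ← hΨ]
    exact cons_ne_empty _ _ _ _ (word_prod_injective this)

end Blocks

/-! #### Subgroup-level lemmas -/

variable {G : Type*} [Group G]

theorem mem_conjSub {g x : G} {P : Subgroup G} : x ∈ conjSub g P ↔ g⁻¹ * x * g ∈ P := by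
  constructor
  · rintro ⟨y, hy, rfl⟩
    simpa [MulAut.conj_apply, mul_assoc] using hy
  · intro h
    exact ⟨g⁻¹ * x * g, h, by simp [MulAut.conj_apply]; group⟩

theorem conjSub_conjSub (a b : G) (P : Subgroup G) :
    conjSub a (conjSub b P) = conjSub (a * b) P := by
  ext x
  simp only [mem_conjSub]
  have h : b⁻¹ * (a⁻¹ * x * a) * b = (a * b)⁻¹ * x * (a * b) := by group
  rw [h]

theorem conjSub_iSup {ι : Sort*} (g : G) (P : ι → Subgroup G) :
    conjSub g (⨆ i, P i) = ⨆ i, conjSub g (P i) := by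
  unfold conjSub
  exact Subgroup.map_iSup _ P

theorem conjSub_eq_bot {g : G} {P : Subgroup G} (h : conjSub g P = ⊥) : P = ⊥ := by
  rw [Subgroup.eq_bot_iff_forall]
  intro x hx
  have hmem : g * x * g⁻¹ ∈ conjSub g P := mem_conjSub.mpr (by simpa [mul_assoc] using hx)
  rw [h, Subgroup.mem_bot] at hmem
  have hx2 : x = g⁻¹ * (g * x * g⁻¹) * g := by group
  rw [hx2, hmem]
  simp

/-- conjugation as a hom from `P` to `conjSub g P` -/
def conjHom (g : G) (P : Subgroup G) : ↥P →* ↥(conjSub g P) where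
  toFun x := ⟨g * x * g⁻¹, mem_conjSub.mpr (by simpa [mul_assoc] using x.2)⟩
  map_one' := by ext; simp
  map_mul' x y := by
    ext
    show g * ((x * y : ↥P) : G) * g⁻¹ = (g * x * g⁻¹) * (g * y * g⁻¹)
    simp only [Subgroup.coe_mul]; group

/-- conjugation back, from `conjSub g P` to `P` -/
def conjHomInv (g : G) (P : Subgroup G) : ↥(conjSub g P) →* ↥P where
  toFun x := ⟨g⁻¹ * x * g, mem_conjSub.mp x.2⟩
  map_one' := by ext; simp
  map_mul' x y := by ext; simp; group

@[simp] theorem coe_conjHom (g : G) (P : Subgroup G) (x : ↥P) :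
    (conjHom g P x : G) = g * x * g⁻¹ := rfl

@[simp] theorem coe_conjHomInv (g : G) (P : Subgroup G) (x : ↥(conjSub g P)) :
    (conjHomInv g P x : G) = g⁻¹ * x * g := rfl

theorem of_eq_of_coe_eq {κ : Type*} (P : κ → Subgroup G) {k k' : κ} (hk : k = k')
    {x : ↥(P k)} {y : ↥(P k')} (hxy : (x : G) = y) :
    (Monoid.CoprodI.of (M := fun (j : κ) => ↥(P j)) x)
      = Monoid.CoprodI.of (M := fun (j : κ) => ↥(P j)) y := by
  subst hk
  exact congrArg (Monoid.CoprodI.of (M := fun (j : κ) => ↥(P j))) (Subtype.ext hxy)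

theorem lift_conj_injective {ι : Type*} (t : G) (P : ι → Subgroup G)
    (h : Function.Injective (Monoid.CoprodI.lift fun i => (P i).subtype)) :
    Function.Injective (Monoid.CoprodI.lift fun i => (conjSub t (P i)).subtype) := by
  set Ξ := Monoid.CoprodI.lift (fun i =>
    (Monoid.CoprodI.of (M := fun (j : ι) => ↥(conjSub t (P j)))).comp (conjHom t (P i))) with hΞ
  set Ξ' := Monoid.CoprodI.lift (fun i =>
    (Monoid.CoprodI.of (M := fun (j : ι) => ↥(P j))).comp (conjHomInv t (P i))) with hΞ'
  have hid : ∀ y, Ξ (Ξ' y) = y := by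
    have : Ξ.comp Ξ' = MonoidHom.id _ := by
      apply Monoid.CoprodI.ext_hom
      intro i
      ext x
      simp only [MonoidHom.comp_apply, MonoidHom.id_apply, lift_of, hΞ, hΞ']
      exact congrArg Monoid.CoprodI.of (Subtype.ext (by simp; group))
    intro y
    exact DFunLike.congr_fun this y
  have hcomp : (Monoid.CoprodI.lift fun i => (conjSub t (P i)).subtype).comp Ξ
      = ((MulAut.conj t).toMonoidHom).comp (Monoid.CoprodI.lift fun i => (P i).subtype) := by
    apply Monoid.CoprodI.ext_hom
    intro i
    ext x
    simp [hΞ, MulAut.conj_apply]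
  have hinj2 : Function.Injective
      ((Monoid.CoprodI.lift fun i => (conjSub t (P i)).subtype).comp Ξ) := by
    rw [hcomp]
    exact (MulAut.conj t).injective.comp h
  intro a b hab
  have hgoal : Ξ (Ξ' a) = Ξ (Ξ' b) → a = b := by rw [hid a, hid b]; exact id
  apply hgoal
  congr 1
  apply hinj2
  simp only [MonoidHom.comp_apply, hid a, hid b]
  exact hab

theorem lift_subtype_injective_congr {ι : Type*} (P Q : ι → Subgroup G) (h : ∀ i, P i = Q i)
    (hinj : Function.Injective (Monoid.CoprodI.lift fun i => (P i).subtype)) :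
    Function.Injective (Monoid.CoprodI.lift fun i => (Q i).subtype) := by
  have : P = Q := funext h
  subst this
  exact hinj

theorem isInternalFreeProductOf_of_equiv {ι κ : Type*} (e : ι ≃ κ) (P : κ → Subgroup G)
    (Q : ι → Subgroup G) (hQ : ∀ i, Q i = P (e i)) {N : Subgroup G}
    (h : IsInternalFreeProductOf Q N) : IsInternalFreeProductOf P N := by
  have h'A : ∀ k, P k = Q (e.symm k) := fun k => by rw [hQ (e.symm k), e.apply_symm_apply]
  set Θ := Monoid.CoprodI.lift (fun i =>
    (Monoid.CoprodI.of (M := fun (k : κ) => ↥(P k)) (i := e i)).comp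
      (MulEquiv.subgroupCongr (hQ i)).toMonoidHom) with hΘ
  set Θ' := Monoid.CoprodI.lift (fun k =>
    (Monoid.CoprodI.of (M := fun (i : ι) => ↥(Q i)) (i := e.symm k)).comp
      (MulEquiv.subgroupCongr (h'A k)).toMonoidHom) with hΘ'
  have hid : ∀ y, Θ (Θ' y) = y := by
    have : Θ.comp Θ' = MonoidHom.id _ := by
      apply Monoid.CoprodI.ext_hom
      intro k
      ext x
      simp only [MonoidHom.comp_apply, MonoidHom.id_apply, lift_of, hΘ, hΘ']
      refine of_eq_of_coe_eq P (k := e (e.symm k)) (k' := k) (e.apply_symm_apply k) ?_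
      rfl
    intro y
    exact DFunLike.congr_fun this y
  have hcomp : (Monoid.CoprodI.lift fun k => (P k).subtype).comp Θ
      = Monoid.CoprodI.lift fun i => (Q i).subtype := by
    apply Monoid.CoprodI.ext_hom
    intro i
    ext x
    simp [hΘ, MulEquiv.subgroupCongr_apply]
  constructor
  · intro a b hab
    have h2 : Function.Injective ((Monoid.CoprodI.lift fun k => (P k).subtype).comp Θ) := by
      rw [hcomp]; exact h.1
    have hgoal : Θ (Θ' a) = Θ (Θ' b) → a = b := by rw [hid a, hid b]; exact id
    apply hgoal
    congr 1
    apply h2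
    simp only [MonoidHom.comp_apply, hid a, hid b]
    exact hab
  · rw [← e.iSup_comp (g := P)]
    rw [← h.2]
    exact iSup_congr (fun i => (hQ i).symm)

theorem mem_of_conj_internal {ι : Type*} (P : ι → Subgroup G)
    (hinj : Function.Injective (Monoid.CoprodI.lift fun i => (P i).subtype))
    (i₀ : ι) (hne : P i₀ ≠ ⊥) {x : G} (hx : x ∈ ⨆ i, P i)
    (hc : ∀ h ∈ P i₀, x * h * x⁻¹ ∈ P i₀) (hc' : ∀ h ∈ P i₀, x⁻¹ * h * x ∈ P i₀) :
    x ∈ P i₀ := by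
  set f := Monoid.CoprodI.lift fun i => (P i).subtype with hf
  have hrange : f.range = ⨆ i, P i := by
    rw [hf, Monoid.CoprodI.range_eq_iSup]
    congr 1
    funext i
    exact (P i).range_subtype
  have hxr : x ∈ f.range := by rw [hrange]; exact hx
  obtain ⟨y, hy⟩ := hxr
  have hnt : ∃ g : ↥(P i₀), g ≠ 1 := by
    have : Nontrivial ↥(P i₀) := (Subgroup.nontrivial_iff_ne_bot (P i₀)).mpr hne
    obtain ⟨g, hg⟩ := exists_ne (1 : ↥(P i₀))
    exact ⟨g, hg⟩
  have key : ∃ g₀ : ↥(P i₀), y = Monoid.CoprodI.of (M := fun i => ↥(P i)) g₀ := by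
    apply of_range_of_conj (Gf := fun i => ↥(P i)) hnt
    · intro g
      refine ⟨⟨x * g * x⁻¹, hc g g.2⟩, ?_⟩
      apply hinj
      rw [map_mul, map_mul, hy]
      have h1 : f (Monoid.CoprodI.of (M := fun i => ↥(P i)) g) = (g : G) := by rw [hf]; simp
      have h2 : f (Monoid.CoprodI.of (M := fun i => ↥(P i)) (⟨x * g * x⁻¹, hc g g.2⟩ :
          ↥(P i₀))) = x * g * x⁻¹ := by rw [hf]; simp
      rw [h1, h2, map_inv, hy]
    · intro g
      refine ⟨⟨x⁻¹ * g * x, hc' g g.2⟩, ?_⟩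
      apply hinj
      rw [map_mul, map_mul, map_inv, hy]
      have h1 : f (Monoid.CoprodI.of (M := fun i => ↥(P i)) g) = (g : G) := by rw [hf]; simp
      have h2 : f (Monoid.CoprodI.of (M := fun i => ↥(P i)) (⟨x⁻¹ * g * x, hc' g g.2⟩ :
          ↥(P i₀))) = x⁻¹ * g * x := by rw [hf]; simp
      rw [h1, h2]
  obtain ⟨g₀, rfl⟩ := key
  have : f (Monoid.CoprodI.of (M := fun i => ↥(P i)) g₀) = (g₀ : G) := by rw [hf]; simp
  rw [← hy, this]
  exact g₀.2

section nclIn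

variable (K H : Subgroup G)

theorem le_nclIn : H ≤ nclIn K H := by
  intro a ha
  apply Subgroup.subset_closure
  exact ⟨1, one_mem K, a, ha, by group⟩

theorem nclIn_le (hHK : H ≤ K) : nclIn K H ≤ K := by
  apply (Subgroup.closure_le K).mpr
  rintro x ⟨k, hk, a, ha, rfl⟩
  exact mul_mem (mul_mem hk (hHK ha)) (inv_mem hk)

theorem nclIn_conj {k : G} (hk : k ∈ K) {m : G} (hm : m ∈ nclIn K H) :
    k * m * k⁻¹ ∈ nclIn K H := by
  have hmap : (nclIn K H).map (MulAut.conj k).toMonoidHom ≤ nclIn K H := by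
    unfold nclIn
    rw [MonoidHom.map_closure]
    apply Subgroup.closure_mono
    rintro x ⟨y, ⟨k', hk', a, ha, rfl⟩, rfl⟩
    refine ⟨k * k', mul_mem hk hk', a, ha, ?_⟩
    simp [MulAut.conj_apply]
    group
  apply hmap
  exact ⟨m, hm, by simp [MulAut.conj_apply, mul_assoc]⟩

theorem normalClosure_nclIn : Subgroup.normalClosure ((nclIn K H : Subgroup G) : Set G)
    = Subgroup.normalClosure ((H : Subgroup G) : Set G) := by
  apply le_antisymm
  · apply Subgroup.normalClosure_le_normal
    intro x hx
    have hle : nclIn K H ≤ Subgroup.normalClosure ((H : Subgroup G) : Set G) := by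
      apply (Subgroup.closure_le _).mpr
      rintro y ⟨k, hk, a, ha, rfl⟩
      exact Subgroup.normalClosure_normal.conj_mem a (Subgroup.subset_normalClosure ha) k
    exact hle hx
  · apply Subgroup.normalClosure_le_normal
    intro a ha
    exact Subgroup.subset_normalClosure (le_nclIn K H ha)

end nclIn

end CLAux

/-- transitivity of Cohen-Lyndon triples: let `H ≤ K ≤ G` be groups such
that `(G, K, ⟪H⟫^K)` is a Cohen-Lyndon triple and `H` is a Cohen-Lyndon subgroup of
`K`.  Then `H` is a Cohen-Lyndon subgroup of `G`.  Moreover, if `T` is a left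
transversal of `K⟪H⟫^G` in `G` witnessing the first condition (so that
`⟪⟪H⟫^K⟫^G = ∗_{t∈T} t ⟪H⟫^K t⁻¹`) and `S ⊆ K` is a left transversal of `⟪H⟫^K`
in `K` witnessing the second (so that `⟪H⟫^K = ∗_{s∈S} s H s⁻¹`), then
`TS = {ts : t∈T, s∈S}` is a left transversal of `⟪H⟫^G` in `G` and
`⟪H⟫^G = ∗_{t∈T,s∈S} (ts) H (ts)⁻¹`. -/
theorem cohenLyndon_transitivity {G : Type*} [Group G] (H K : Subgroup G) (hHK : H ≤ K)
    (h1 : IsCohenLyndonTriple G K (nclIn K H))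
    (h2 : IsCohenLyndonSubgroup ↥K (H.subgroupOf K))
    (T : Set G)
    (hT1 : IsLeftTransversal T (K ⊔ Subgroup.normalClosure ((nclIn K H : Subgroup G) : Set G)))
    (hT2 : IsInternalFreeProductOf (fun t : T => conjSub (t : G) (nclIn K H))
      (Subgroup.normalClosure ((nclIn K H : Subgroup G) : Set G)))
    (S : Set G) (hS0 : S ⊆ K)
    (hS1 : ∀ k ∈ K, ∃! s, s ∈ S ∧ s⁻¹ * k ∈ nclIn K H)
    (hS2 : IsInternalFreeProductOf (fun s : S => conjSub (s : G) H) (nclIn K H)) :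
    IsCohenLyndonSubgroup G H ∧
    IsLeftTransversal {x : G | ∃ t ∈ T, ∃ s ∈ S, x = t * s}
      (Subgroup.normalClosure (H : Set G)) ∧
    IsInternalFreeProductOf (fun p : T × S => conjSub ((p.1 : G) * (p.2 : G)) H)
      (Subgroup.normalClosure (H : Set G)) := by
  classical
  set M := nclIn K H with hMdef
  set N := Subgroup.normalClosure ((M : Subgroup G) : Set G) with hNdef
  set NH := Subgroup.normalClosure ((H : Subgroup G) : Set G) with hNHdef
  have hNNH : N = NH := CLAux.normalClosure_nclIn K H
  have hHM : H ≤ M := CLAux.le_nclIn K H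
  have hMK : M ≤ K := CLAux.nclIn_le K H hHK
  have hMN : M ≤ N := fun x hx => Subgroup.subset_normalClosure hx
  have hNnormal : N.Normal := Subgroup.normalClosure_normal
  obtain ⟨t₀, ⟨ht₀T, _⟩, _⟩ := hT1 1
  -- `K ∩ N ≤ M`, via the normalizer property of free factors
  have hKN : ∀ k ∈ K, k ∈ N → k ∈ M := by
    intro k hkK hkN
    by_cases hM : M = ⊥
    · have hN : N = ⊥ := by
        rw [hNdef]
        apply le_antisymm _ bot_le
        apply Subgroup.normalClosure_le_normal
        rw [hM]
      rw [hN, Subgroup.mem_bot] at hkN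
      rw [hkN]
      exact one_mem M
    · have hne : conjSub t₀ M ≠ ⊥ := fun hb => hM (CLAux.conjSub_eq_bot hb)
      have hx : t₀ * k * t₀⁻¹ ∈ ⨆ t : T, conjSub (t : G) M := by
        rw [hT2.2]
        exact hNnormal.conj_mem k hkN t₀
      have hc : ∀ h ∈ conjSub t₀ M,
          (t₀ * k * t₀⁻¹) * h * (t₀ * k * t₀⁻¹)⁻¹ ∈ conjSub t₀ M := by
        intro h hh
        rw [CLAux.mem_conjSub] at hh ⊢
        have heq : t₀⁻¹ * ((t₀ * k * t₀⁻¹) * h * (t₀ * k * t₀⁻¹)⁻¹) * t₀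
            = k * (t₀⁻¹ * h * t₀) * k⁻¹ := by group
        rw [heq]
        exact CLAux.nclIn_conj K H hkK hh
      have hc' : ∀ h ∈ conjSub t₀ M,
          (t₀ * k * t₀⁻¹)⁻¹ * h * (t₀ * k * t₀⁻¹) ∈ conjSub t₀ M := by
        intro h hh
        rw [CLAux.mem_conjSub] at hh ⊢
        have heq : t₀⁻¹ * ((t₀ * k * t₀⁻¹)⁻¹ * h * (t₀ * k * t₀⁻¹)) * t₀
            = k⁻¹ * (t₀⁻¹ * h * t₀) * (k⁻¹)⁻¹ := by group
        rw [heq]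
        exact CLAux.nclIn_conj K H (inv_mem hkK) hh
      have hmem : t₀ * k * t₀⁻¹ ∈ conjSub ((⟨t₀, ht₀T⟩ : T) : G) M :=
        CLAux.mem_of_conj_internal (fun t : T => conjSub (t : G) M) hT2.1
          ⟨t₀, ht₀T⟩ hne hx hc hc'
      rw [CLAux.mem_conjSub] at hmem
      have heq : (t₀ : G)⁻¹ * (t₀ * k * t₀⁻¹) * t₀ = k := by group
      rwa [heq] at hmem
  -- the transversal property of `TS`
  have hTS : IsLeftTransversal {x : G | ∃ t ∈ T, ∃ s ∈ S, x = t * s} NH := by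
    intro g
    obtain ⟨t, ⟨htT, htg⟩, htuniq⟩ := hT1 g
    obtain ⟨k, hk, n, hn, hkn⟩ : ∃ k ∈ (K : Set G), ∃ n ∈ (N : Set G), k * n = t⁻¹ * g := by
      have hmem : t⁻¹ * g ∈ ((K ⊔ N : Subgroup G) : Set G) := htg
      rw [Subgroup.mul_normal] at hmem
      exact Set.mem_mul.mp hmem
    obtain ⟨s, ⟨hsS, hsk⟩, hsuniq⟩ := hS1 k hk
    refine ⟨t * s, ⟨⟨t, htT, s, hsS, rfl⟩, ?_⟩, ?_⟩
    · rw [← hNNH]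
      have heq : (t * s)⁻¹ * g = (s⁻¹ * k) * n := by
        rw [mul_assoc, hkn]
        group
      rw [heq]
      exact mul_mem (hMN hsk) hn
    · rintro x ⟨⟨t', ht', s', hs', rfl⟩, hx⟩
      rw [← hNNH] at hx
      have ht'KN : t'⁻¹ * g ∈ K ⊔ N := by
        have heq : t'⁻¹ * g = s' * ((t' * s')⁻¹ * g) := by group
        rw [heq]
        exact mul_mem (Subgroup.mem_sup_left (hS0 hs')) (Subgroup.mem_sup_right hx)
      have htt' : t' = t := htuniq t' ⟨ht', ht'KN⟩
      subst htt'
      have h1' : s'⁻¹ * k ∈ M := by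
        apply hKN _ (mul_mem (inv_mem (hS0 hs')) hk)
        have heq : s'⁻¹ * k = ((t' * s')⁻¹ * g) * n⁻¹ := by
          have h3 : (t' * s')⁻¹ * g = s'⁻¹ * (t'⁻¹ * g) := by group
          rw [h3, ← hkn]
          group
        rw [heq]
        exact mul_mem hx (inv_mem hn)
      have hss' : s' = s := hsuniq s' ⟨hs', h1'⟩
      rw [hss']
  -- the free product decomposition over `T × S`
  have hfree : IsInternalFreeProductOf
      (fun p : T × S => conjSub ((p.1 : G) * (p.2 : G)) H) NH := by
    have hle : ∀ (t : T) (s : S), conjSub ((t : G) * (s : G)) H ≤ conjSub (t : G) M := by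
      intro t s
      intro x hx
      rw [CLAux.mem_conjSub] at hx ⊢
      have hxs : (t : G)⁻¹ * x * t ∈ conjSub (s : G) H := by
        rw [CLAux.mem_conjSub]
        have heq : (s : G)⁻¹ * ((t : G)⁻¹ * x * t) * s
            = ((t : G) * s)⁻¹ * x * ((t : G) * s) := by group
        rw [heq]
        exact hx
      have hsM : conjSub (s : G) H ≤ M := by
        rw [← hS2.2]
        exact le_iSup (fun s : S => conjSub (s : G) H) s
      exact hsM hxs
    set φ : ∀ (t : T) (s : S), ↥(conjSub ((t : G) * (s : G)) H) →* ↥(conjSub (t : G) M) :=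
      fun t s => Subgroup.inclusion (hle t s) with hφdef
    have hφ : ∀ t : T, Function.Injective (Monoid.CoprodI.lift fun s : S => φ t s) := by
      intro t
      have hinj' : Function.Injective
          (Monoid.CoprodI.lift (fun s : S => (conjSub ((t : G) * (s : G)) H).subtype)) := by
        apply CLAux.lift_subtype_injective_congr
          (fun s : S => conjSub (t : G) (conjSub (s : G) H))
        · intro s
          exact CLAux.conjSub_conjSub _ _ _
        · exact CLAux.lift_conj_injective (t : G) (fun s : S => conjSub (s : G) H) hS2.1
      have hcomp : (conjSub (t : G) M).subtype.comp (Monoid.CoprodI.lift fun s : S => φ t s)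
          = Monoid.CoprodI.lift (fun s : S => (conjSub ((t : G) * (s : G)) H).subtype) := by
        apply Monoid.CoprodI.ext_hom
        intro s
        ext x
        simp [hφdef]
      have hinj2 : Function.Injective
          ((conjSub (t : G) M).subtype.comp (Monoid.CoprodI.lift fun s : S => φ t s)) := by
        rw [hcomp]
        exact hinj'
      exact Function.Injective.of_comp (f := (conjSub (t : G) M).subtype) hinj2
    constructor
    · have hF : (Monoid.CoprodI.lift
            fun p : T × S => (conjSub ((p.1 : G) * (p.2 : G)) H).subtype)
          = (Monoid.CoprodI.lift fun t : T => (conjSub (t : G) M).subtype).comp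
            (CLAux.blockMap φ) := by
        apply Monoid.CoprodI.ext_hom
        intro p
        ext x
        simp [CLAux.blockMap, hφdef]
      rw [hF]
      exact hT2.1.comp (CLAux.blockMap_injective φ hφ)
    · rw [iSup_prod]
      have hstep : ∀ t : T, (⨆ s : S, conjSub ((t : G) * (s : G)) H) = conjSub (t : G) M := by
        intro t
        have h1' : (⨆ s : S, conjSub ((t : G) * (s : G)) H)
            = ⨆ s : S, conjSub (t : G) (conjSub (s : G) H) :=
          iSup_congr fun s => (CLAux.conjSub_conjSub _ _ _).symm
        rw [h1', ← CLAux.conjSub_iSup, hS2.2]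
      calc (⨆ t : T, ⨆ s : S, conjSub ((t : G) * (s : G)) H)
          = ⨆ t : T, conjSub (t : G) M := iSup_congr hstep
        _ = N := hT2.2
        _ = NH := hNNH
  -- the bijection between `T × S` and the set `TS`
  have hfmem : ∀ p : T × S, (p.1 : G) * (p.2 : G) ∈ {x : G | ∃ t ∈ T, ∃ s ∈ S, x = t * s} :=
    fun p => ⟨p.1, p.1.2, p.2, p.2.2, rfl⟩
  set f : T × S → {x : G | ∃ t ∈ T, ∃ s ∈ S, x = t * s} :=
    fun p => ⟨(p.1 : G) * (p.2 : G), hfmem p⟩ with hfdef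
  have hbij : Function.Bijective f := by
    constructor
    · rintro ⟨t, s⟩ ⟨t', s'⟩ hpq
      have hts : (t : G) * s = (t' : G) * s' := congrArg Subtype.val hpq
      obtain ⟨u, _, huniq⟩ := hT1 ((t : G) * s)
      have hu1 : (t : G) = u := by
        apply huniq
        refine ⟨t.2, ?_⟩
        have heq : (t : G)⁻¹ * ((t : G) * s) = s := by group
        rw [heq]
        exact Subgroup.mem_sup_left (hS0 s.2)
      have hu2 : (t' : G) = u := by
        apply huniq
        refine ⟨t'.2, ?_⟩
        have heq : (t' : G)⁻¹ * ((t : G) * s) = (t' : G)⁻¹ * ((t' : G) * s') := by rw [hts]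
        rw [heq]
        have heq2 : (t' : G)⁻¹ * ((t' : G) * s') = s' := by group
        rw [heq2]
        exact Subgroup.mem_sup_left (hS0 s'.2)
      have htt' : (t : G) = t' := by rw [hu1, hu2]
      have hss' : (s : G) = s' := by
        have h4 := hts
        rw [htt'] at h4
        exact mul_left_cancel h4
      ext
      · exact htt'
      · exact hss'
    · rintro ⟨x, t, ht, s, hs, rfl⟩
      exact ⟨(⟨t, ht⟩, ⟨s, hs⟩), rfl⟩
  have hfree' : IsInternalFreeProductOf
      (fun u : {x : G | ∃ t ∈ T, ∃ s ∈ S, x = t * s} => conjSub (u : G) H) NH := by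
    apply CLAux.isInternalFreeProductOf_of_equiv (Equiv.ofBijective f hbij)
      (fun u : {x : G | ∃ t ∈ T, ∃ s ∈ S, x = t * s} => conjSub (u : G) H)
      (fun p : T × S => conjSub ((p.1 : G) * (p.2 : G)) H)
      (fun p => rfl) hfree
  refine ⟨⟨le_refl H, fun h hh n hn => mul_mem (mul_mem hh hn) (inv_mem hh),
    {x : G | ∃ t ∈ T, ∃ s ∈ S, x = t * s}, ?_, ?_⟩, hTS, hfree⟩
  · have hsup : H ⊔ Subgroup.normalClosure ((H : Subgroup G) : Set G)
        = Subgroup.normalClosure ((H : Subgroup G) : Set G) :=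
      sup_eq_right.mpr (fun x hx => Subgroup.subset_normalClosure hx)
    rw [hsup]
    exact hTS
  · exact hfree'
end
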